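/- arXiv:math/0609787 — 4 statements merged into one kernel-verified Lean document; each statement's English description precedes it below -/
import Mathlib

section
/- Let n ∈ ℕ, 0 < r_j < ∞, 1 ≤ p_j < ∞, 1 ≤ θ_j ≤ ∞ for j = 1,…,n; define r, p, θ and β_j as in the context and suppose β_j > 0 for every j. Let 0 < δ ≤ (1/2)·min_{1≤j≤n} {β_j r_j}. Let φ_j be positive, strictly increasing, continuously differentiable functions on (0,∞) with t^{−r_j}φ_j(t) ∈ 𝓛^{θ_j}, such that t ↦ φ_j(t)t^{−r_j+δ} increases and t ↦ φ_j(t)t^{−r_j−δ} decreases. Define σ(t) = inf { max_{1≤j≤n} t^{−1/p_j} φ_j(δ_j) : δ_j > 0, ∏_{j=1}^n δ_j = t }. Then there exist positive, continuously differentiable functions δ_j(t) on (0,∞) such that ∏_{j=1}^n δ_j(t) = t for all t > 0 and σ(t) = t^{−1/p_j} φ_j(δ_j(t)) for every t > 0 and every j = 1,…,n. -/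
/-!
Monotonicity of `φ_j(t) t^{δ - r_j}` says that `log φ_j(e^x)` grows with slope at least
`r_j - δ`, which is positive: the weights `r / (n r_j)` average the `1/p_j` to `1/p`, so
`β_j r_j ≤ r/n` for some `j`, whence `δ ≤ r/(2n) < r_j`. Hence every `φ_j` is a `C¹`
diffeomorphism of `(0,∞)` with positive derivative, with inverse `ψ_j`. Equalizing
`t^{-1/p_j} φ_j(δ_j) = s` forces `δ_j = ψ_j(s t^{1/p_j})`; the product of these is strictly
increasing in `s`, so it equals `t` for exactly one `s = S(t)`, which is `C¹` by the implicit
function theorem. For any other admissible choice some `δ_j` is at least `ψ_j(S(t) t^{1/p_j})`,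
so `σ(t) = S(t)`.
-/

open MeasureTheory Set
open scoped ENNReal NNReal BigOperators

noncomputable section

/-- The measure `du/u` on `(0,∞)`. -/
def muLog : Measure ℝ :=
  (volume.restrict (Set.Ioi (0:ℝ))).withDensity fun u => ENNReal.ofReal u⁻¹

/-- The `𝓛^θ` norm of an `ℝ≥0∞`-valued function on `(0,∞)` (with respect to `du/u`),
for `θ ∈ [1,∞]`; for `θ = ∞` it is the essential supremum. -/
def calLE (θ : ℝ≥0∞) (g : ℝ → ℝ≥0∞) : ℝ≥0∞ :=
  if θ = ∞ then essSup g muLog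
  else (∫⁻ t, g t ^ θ.toReal ∂muLog) ^ (1 / θ.toReal)

/-- The `𝓛^θ` norm of a real-valued function on `(0,∞)`. -/
def calL (θ : ℝ≥0∞) (g : ℝ → ℝ) : ℝ≥0∞ :=
  calLE θ fun t => ENNReal.ofReal |g t|

/-- The distribution function `λ_f(y) = |{x : |f x| > y}|`. -/
def distFn {n : ℕ} (f : (Fin n → ℝ) → ℝ) (y : ℝ) : ℝ≥0∞ :=
  volume {x | y < |f x|}

/-- `f ∈ S₀(ℝⁿ)`: measurable with finite distribution function for all `y > 0`. -/
def MemS0 {n : ℕ} (f : (Fin n → ℝ) → ℝ) : Prop :=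
  Measurable f ∧ ∀ y : ℝ, 0 < y → distFn f y < ∞

/-- The non-increasing rearrangement `f*`. -/
def rearr {n : ℕ} (f : (Fin n → ℝ) → ℝ) (t : ℝ) : ℝ :=
  sInf {y : ℝ | 0 ≤ y ∧ distFn f y ≤ ENNReal.ofReal t}

/-- The real-valued `L^p(ℝⁿ)` norm. -/
def lpR {n : ℕ} (p : ℝ) (f : (Fin n → ℝ) → ℝ) : ℝ :=
  (eLpNorm f (ENNReal.ofReal p) volume).toReal

/-- The difference of degree `k` in direction `j` with step `h`:
`Δ_j^k(h) f (x) = ∑ (-1)^{k-i} C(k,i) f(x + i h e_j)`. -/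
def diffOp {n : ℕ} (j : Fin n) (k : ℕ) (h : ℝ) (f : (Fin n → ℝ) → ℝ) :
    (Fin n → ℝ) → ℝ :=
  fun x => ∑ i ∈ Finset.range (k + 1),
    (-1 : ℝ) ^ (k - i) * (k.choose i : ℝ) * f (x + ((i : ℝ) * h) • (Pi.single j 1 : Fin n → ℝ))

/-- The modulus of continuity `ω_j^k(f;δ)_p = sup_{0<h≤δ} ‖Δ_j^k(h) f‖_p`. -/
def modCont {n : ℕ} (j : Fin n) (k : ℕ) (p : ℝ) (f : (Fin n → ℝ) → ℝ) (δ : ℝ) : ℝ :=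
  sSup ((fun h => lpR p (diffOp j k h f)) '' Set.Ioc 0 δ)

/-- The directional Besov seminorm `‖f‖_{b^r_{p,θ;j}}` with difference order `k`. -/
def besov {n : ℕ} (j : Fin n) (k : ℕ) (r p : ℝ) (θ : ℝ≥0∞)
    (f : (Fin n → ℝ) → ℝ) : ℝ≥0∞ :=
  calL θ fun h => h ^ (-r) * lpR p (diffOp j k h f)

/-- The Lorentz quasinorm `‖f‖_{q,s} = ‖t^{1/q} f*(t)‖_{𝓛^s}`. -/
def lorentz {n : ℕ} (q : ℝ) (s : ℝ≥0∞) (f : (Fin n → ℝ) → ℝ) : ℝ≥0∞ :=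
  calL s fun t => t ^ (1 / q) * rearr f t

/-- The norm in the sum space `L¹ + L^{p₀}`. -/
def sumNormE {n : ℕ} (p₀ : ℝ) (f : (Fin n → ℝ) → ℝ) : ℝ≥0∞ :=
  ⨅ (g : (Fin n → ℝ) → ℝ) (h : (Fin n → ℝ) → ℝ) (_ : f = g + h),
    eLpNorm g 1 volume + eLpNorm h (ENNReal.ofReal p₀) volume

/-- The function `σ(t) = inf { max_j t^{-1/p_j} φ_j(δ_j) : δ_j > 0, ∏ δ_j = t }`. -/
def sigmaFn {n : ℕ} (pp : Fin n → ℝ) (φ : Fin n → ℝ → ℝ) (t : ℝ) : ℝ :=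
  sInf {a : ℝ | ∃ d : Fin n → ℝ, (∀ j, 0 < d j) ∧ (∏ j, d j) = t ∧
    a = ⨆ j, t ^ (-(pp j)⁻¹) * φ j (d j)}


open Filter Topology Function

theorem contDiffAt_of_implicit {E : Type*} [NormedAddCommGroup E] [NormedSpace ℝ E]
    [CompleteSpace E] {n : WithTop ℕ∞} {F : E × ℝ → ℝ} {g : E → ℝ} {x : E} {c : ℝ}
    {U : Set ℝ} (hF : ContDiffAt ℝ n F (x, g x)) (hn : n ≠ 0)
    (hFx : HasDerivAt (fun y => F (x, y)) c (g x)) (hc : c ≠ 0)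
    (hU : U ∈ 𝓝 (g x)) (hinj : ∀ᶠ t in 𝓝 x, InjOn (fun y => F (t, y)) U)
    (hg : ∀ᶠ t in 𝓝 x, g t ∈ U ∧ F (t, g t) = F (x, g x)) : ContDiffAt ℝ n g x := by
  have hinv : (fderiv ℝ F (x, g x) ∘L .inr ℝ E ℝ).IsInvertible := by
    have h1 : (fderiv ℝ F (x, g x) ∘L .inr ℝ E ℝ) 1 = c :=
      ((hF.differentiableAt hn).hasFDerivAt.comp_hasDerivAt (g x)
        ((hasDerivAt_const (g x) x).prodMk (hasDerivAt_id (g x)))).unique hFx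
    refine .of_inverse (g := c⁻¹ • .id ℝ ℝ) ?_ ?_ <;> ext <;> simp [h1, hc]
  have hψ := hF.contDiffAt_implicitFunction hn hinv
  have hψx : hF.implicitFunction hn hinv x = g x := hF.implicitFunction_apply_self hn hinv
  -- `g` needs no continuity: injectivity identifies it with the implicit function near `x`.
  refine hψ.congr_of_eventuallyEq ?_
  filter_upwards [hinj, hg, hF.eventually_apply_implicitFunction hn hinv,
    hψ.continuousAt.preimage_mem_nhds (hψx ▸ hU)] with t hinjt hgt hψt hψU
  exact hinjt hgt.1 hψU (hgt.2.trans hψt.symm)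

section Inverse

variable {𝕜 : Type*} {φ : 𝕜 → 𝕜} {S : Set 𝕜} {x : 𝕜}

theorem hasStrictDerivAt_invFunOn [NontriviallyNormedField 𝕜] [CompleteSpace 𝕜] {φ' : 𝕜}
    (hS : IsOpen S) (hinj : InjOn φ S) (hx : x ∈ S) (hφ : HasStrictDerivAt φ φ' x)
    (hφ' : φ' ≠ 0) : HasStrictDerivAt (invFunOn φ S) φ'⁻¹ (φ x) :=
  hφ.to_local_left_inverse hφ' <| eventually_of_mem (hS.mem_nhds hx) hinj.leftInvOn_invFunOn

theorem contDiffAt_invFunOn [RCLike 𝕜] {n : WithTop ℕ∞} (hS : IsOpen S) (hinj : InjOn φ S)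
    (hx : x ∈ S) (hφ : ContDiffAt 𝕜 n φ x) (hn : n ≠ 0) (hφ' : deriv φ x ≠ 0) :
    ContDiffAt 𝕜 n (invFunOn φ S) (φ x) := by
  have hd := ((hφ.differentiableAt hn).hasDerivAt).hasFDerivAt_equiv hφ'
  have hloc := (hφ.hasStrictFDerivAt' hd hn).localInverse_unique
    (eventually_of_mem (hS.mem_nhds hx) hinj.leftInvOn_invFunOn)
  exact (hφ.to_localInverse hd hn).congr_of_eventuallyEq hloc

end Inverse

section Growth

variable {φ : ℝ → ℝ} {c : ℝ}

theorem mul_rpow_le_of_monotoneOn_mul_rpow_neg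
    (hφ : MonotoneOn (fun t => φ t * t ^ (-c)) (Ioi 0))
    {x b : ℝ} (hx : 0 < x) (hxb : x ≤ b) : φ x * b ^ c ≤ φ b * x ^ c := by
  have hb : 0 < b := hx.trans_le hxb
  have h := mul_le_mul_of_nonneg_right (hφ hx hb hxb) (by positivity : 0 ≤ x ^ c * b ^ c)
  have hx' : x ^ (-c) * x ^ c = 1 := by rw [← Real.rpow_add hx, neg_add_cancel, Real.rpow_zero]
  have hb' : b ^ (-c) * b ^ c = 1 := by rw [← Real.rpow_add hb, neg_add_cancel, Real.rpow_zero]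
  calc φ x * b ^ c = φ x * (x ^ (-c) * x ^ c) * b ^ c := by rw [hx', mul_one]
    _ ≤ φ b * (b ^ (-c) * b ^ c) * x ^ c := by linarith
    _ = φ b * x ^ c := by rw [hb', mul_one]

theorem surjOn_Ioi_of_monotoneOn_mul_rpow_neg (hc : 0 < c) (hpos : ∀ t, 0 < t → 0 < φ t)
    (hφ : MonotoneOn (fun t => φ t * t ^ (-c)) (Ioi 0)) (hcont : ContinuousOn φ (Ioi 0)) :
    SurjOn φ (Ioi 0) (Ioi 0) := by
  intro y (hy : 0 < y)
  have h0 : Tendsto (fun a : ℝ => φ 1 * a ^ c) (𝓝[>] 0) (𝓝 0) := by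
    have : ContinuousAt (fun a : ℝ => φ 1 * a ^ c) 0 :=
      (Real.continuousAt_rpow_const 0 c (Or.inr hc.le)).const_mul _
    simpa [Real.zero_rpow hc.ne'] using this.tendsto.mono_left nhdsWithin_le_nhds
  obtain ⟨a, hay, ha0, ha1⟩ :=
    ((h0.eventually (gt_mem_nhds hy)).and (Ioo_mem_nhdsGT one_pos)).exists
  obtain ⟨b, hyb, hb1⟩ :=
    ((((tendsto_rpow_atTop hc).const_mul_atTop (hpos 1 one_pos)).eventually
      (eventually_gt_atTop y)).and (eventually_ge_atTop 1)).exists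
  have hφa : φ a < y := by
    have := mul_rpow_le_of_monotoneOn_mul_rpow_neg hφ ha0 ha1.le
    rw [Real.one_rpow, mul_one] at this
    exact this.trans_lt hay
  have hφb : y < φ b := by
    have := mul_rpow_le_of_monotoneOn_mul_rpow_neg hφ one_pos hb1
    rw [Real.one_rpow, mul_one] at this
    exact hyb.trans_le this
  obtain ⟨x, hx, rfl⟩ := intermediate_value_Ioo (ha1.trans_le hb1).le
    (hcont.mono fun t ht => ha0.trans_le ht.1) ⟨hφa, hφb⟩
  exact ⟨x, ha0.trans hx.1, rfl⟩

theorem pos_of_hasDerivAt_of_monotoneOn_mul_rpow_neg (hc : 0 < c)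
    (hpos : ∀ t, 0 < t → 0 < φ t) (hφ : MonotoneOn (fun t => φ t * t ^ (-c)) (Ioi 0))
    {x φ' : ℝ} (hx : 0 < x) (hd : HasDerivAt φ φ' x) : 0 < φ' := by
  have hg : HasDerivAt (fun t => φ t * t ^ (-c))
      (φ' * x ^ (-c) + φ x * (-c * x ^ (-c - 1))) x :=
    hd.mul (Real.hasDerivAt_rpow_const (Or.inl hx.ne'))
  have h0 : 0 ≤ φ' * x ^ (-c) + φ x * (-c * x ^ (-c - 1)) := by
    rw [← hg.deriv, ← derivWithin_of_isOpen isOpen_Ioi hx]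
    exact hφ.derivWithin_nonneg
  have h1 : 0 < φ x * (c * x ^ (-c - 1)) := by have := hpos x hx; positivity
  have h2 : 0 < φ' * x ^ (-c) := by linarith
  exact pos_of_mul_pos_left h2 (by positivity)

end Growth

section Equalizer

variable {ι : Type*} [Fintype ι] [Nonempty ι] {ψ : ι → ℝ → ℝ} {a : ι → ℝ}

theorem exists_pos_prod_eq (hmono : ∀ j, MonotoneOn (ψ j) (Ioi 0))
    (hsurj : ∀ j, SurjOn (ψ j) (Ioi 0) (Ioi 0)) (hcont : ∀ j, ContinuousOn (ψ j) (Ioi 0))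
    (hmaps : ∀ j, MapsTo (ψ j) (Ioi 0) (Ioi 0)) {t : ℝ} (ht : 0 < t) :
    ∃ s, 0 < s ∧ ∏ j, ψ j (s * t ^ a j) = t := by
  set m := t ^ (Fintype.card ι : ℝ)⁻¹
  have hm : ∏ _j : ι, m = t := by
    rw [Finset.prod_const, Finset.card_univ, ← Real.rpow_natCast, ← Real.rpow_mul ht.le,
      inv_mul_cancel₀ (by positivity), Real.rpow_one]
  -- At `s = q j` the `j`-th factor is `m`; the least and the largest `q j` bracket the root.
  choose y hy hψy using fun j => hsurj j (show 0 < m by positivity)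
  set q := fun j => y j / t ^ a j
  have hq : ∀ j, 0 < q j := fun j => div_pos (hy j) (by positivity)
  have hqy : ∀ j, q j * t ^ a j = y j := fun j => div_mul_cancel₀ _ (by positivity)
  have harg : ∀ {s}, 0 < s → ∀ j, s * t ^ a j ∈ Ioi 0 := fun hs j => by
    simp only [mem_Ioi]; positivity
  obtain ⟨j₀, -, hj₀⟩ := Finset.exists_min_image Finset.univ q Finset.univ_nonempty
  obtain ⟨j₁, -, hj₁⟩ := Finset.exists_max_image Finset.univ q Finset.univ_nonempty
  have hlow : ∏ j, ψ j (q j₀ * t ^ a j) ≤ t := by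
    refine (Finset.prod_le_prod (fun j _ => (hmaps j (harg (hq j₀) j)).le)
      fun j _ => ?_).trans_eq hm
    rw [← hψy j, ← hqy j]
    exact hmono j (harg (hq j₀) j) (harg (hq j) j) (by gcongr; exact hj₀ j (Finset.mem_univ j))
  have hhigh : t ≤ ∏ j, ψ j (q j₁ * t ^ a j) := by
    refine hm.symm.trans_le (Finset.prod_le_prod (fun j _ => by positivity) fun j _ => ?_)
    rw [← hψy j, ← hqy j]
    exact hmono j (harg (hq j) j) (harg (hq j₁) j) (by gcongr; exact hj₁ j (Finset.mem_univ j))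
  have hcontP : ContinuousOn (fun s => ∏ j, ψ j (s * t ^ a j)) (Icc (q j₀) (q j₁)) :=
    continuousOn_finsetProd _ fun j _ => (hcont j).comp (by fun_prop)
      fun s hs => harg ((hq j₀).trans_le hs.1) j
  obtain ⟨s, hs, hPs⟩ :=
    intermediate_value_Icc (hj₀ j₁ (Finset.mem_univ _)) hcontP ⟨hlow, hhigh⟩
  exact ⟨s, (hq j₀).trans_le hs.1, hPs⟩

theorem exists_contDiffOn_prod_eq (hcd : ∀ j, ContDiffOn ℝ 1 (ψ j) (Ioi 0))
    (hderiv : ∀ j y, 0 < y → 0 < deriv (ψ j) y)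
    (hsurj : ∀ j, SurjOn (ψ j) (Ioi 0) (Ioi 0)) (hmaps : ∀ j, MapsTo (ψ j) (Ioi 0) (Ioi 0)) :
    ∃ S : ℝ → ℝ, ContDiffOn ℝ 1 S (Ioi 0) ∧
      ∀ t, 0 < t → 0 < S t ∧ ∏ j, ψ j (S t * t ^ a j) = t := by
  classical
  have hmono : ∀ j, StrictMonoOn (ψ j) (Ioi 0) := fun j =>
    strictMonoOn_of_deriv_pos (convex_Ioi 0) (hcd j).continuousOn
      fun y hy => hderiv j y (by simpa using hy)
  choose! S hSpos hS using fun t (ht : 0 < t) =>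
    exists_pos_prod_eq (a := a) (fun j => (hmono j).monotoneOn) hsurj
      (fun j => (hcd j).continuousOn) hmaps ht
  refine ⟨S, fun t₀ (ht₀ : 0 < t₀) => ContDiffAt.contDiffWithinAt ?_,
    fun t ht => ⟨hSpos t ht, hS t ht⟩⟩
  have harg : ∀ {t s : ℝ}, 0 < t → 0 < s → ∀ j, s * t ^ a j ∈ Ioi 0 := fun ht hs j => by
    simp only [mem_Ioi]; positivity
  have hu : ∀ j, S t₀ * t₀ ^ a j ∈ Ioi 0 := harg ht₀ (hSpos t₀ ht₀)
  set F : ℝ × ℝ → ℝ := fun q => ∏ j, ψ j (q.2 * q.1 ^ a j) - q.1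
  have hFs : HasDerivAt (fun s => F (t₀, s)) (∑ j, (∏ i ∈ Finset.univ.erase j,
      ψ i (S t₀ * t₀ ^ a i)) • (deriv (ψ j) (S t₀ * t₀ ^ a j) * t₀ ^ a j)) (S t₀) := by
    refine (HasDerivAt.fun_finsetProd fun j _ => ?_).sub_const t₀
    exact (((hcd j).contDiffAt (Ioi_mem_nhds (hu j))).differentiableAt
      one_ne_zero).hasDerivAt.comp (S t₀) (hasDerivAt_mul_const (x := S t₀) (t₀ ^ a j))
  refine contDiffAt_of_implicit (F := F) (U := Ioi 0) ?_ one_ne_zero hFs ?_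
    (Ioi_mem_nhds (hSpos t₀ ht₀)) ?_ ?_
  · refine (contDiffAt_prod fun j _ => ?_).sub contDiffAt_fst
    exact ((hcd j).contDiffAt (Ioi_mem_nhds (hu j))).comp (t₀, S t₀) (contDiffAt_snd.mul
      ((Real.contDiffAt_rpow_const_of_ne ht₀.ne').comp (t₀, S t₀) contDiffAt_fst))
  · refine (Finset.sum_pos (fun j _ => ?_) Finset.univ_nonempty).ne'
    have := hderiv j _ (hu j)
    have := Finset.prod_pos fun i (_ : i ∈ Finset.univ.erase j) => mem_Ioi.mp (hmaps i (hu i))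
    simp only [smul_eq_mul]
    positivity
  · filter_upwards [Ioi_mem_nhds ht₀] with t (ht : 0 < t)
    refine StrictMonoOn.injOn fun s₁ hs₁ s₂ hs₂ hs => sub_lt_sub_right
      (Finset.prod_lt_prod_of_nonempty (fun j _ => hmaps j (harg ht hs₁ j))
        (fun j _ => hmono j (harg ht hs₁ j) (harg ht hs₂ j) ?_) Finset.univ_nonempty) t
    exact mul_lt_mul_of_pos_right hs (by positivity)
  · filter_upwards [Ioi_mem_nhds ht₀] with t ht
    exact ⟨hSpos t ht, by simp only [F, hS t ht, hS t₀ ht₀, sub_self]⟩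

theorem exists_contDiffOn_equalizer {φ : ι → ℝ → ℝ}
    (hφ : ∀ j, ContDiffOn ℝ 1 (φ j) (Ioi 0)) (hmono : ∀ j, StrictMonoOn (φ j) (Ioi 0))
    (hmaps : ∀ j, MapsTo (φ j) (Ioi 0) (Ioi 0)) (hsurj : ∀ j, SurjOn (φ j) (Ioi 0) (Ioi 0))
    (hderiv : ∀ j x, 0 < x → 0 < deriv (φ j) x) :
    ∃ (d : ι → ℝ → ℝ) (S : ℝ → ℝ), (∀ j, ContDiffOn ℝ 1 (d j) (Ioi 0)) ∧
      (∀ j t, 0 < t → 0 < d j t) ∧ (∀ t, 0 < t → ∏ j, d j t = t) ∧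
      ∀ j t, 0 < t → t ^ (-a j) * φ j (d j t) = S t := by
  set ψ := fun j => invFunOn (φ j) (Ioi 0)
  have hφψ : ∀ j, RightInvOn (ψ j) (φ j) (Ioi 0) := fun j => (hsurj j).rightInvOn_invFunOn
  have hψmaps : ∀ j, MapsTo (ψ j) (Ioi 0) (Ioi 0) := fun j => (hsurj j).mapsTo_invFunOn
  have hψsurj : ∀ j, SurjOn (ψ j) (Ioi 0) (Ioi 0) := fun j =>
    (hmono j).injOn.leftInvOn_invFunOn.surjOn (hmaps j)
  have hψd : ∀ j {y : ℝ}, 0 < y → HasStrictDerivAt (ψ j) (deriv (φ j) (ψ j y))⁻¹ y := by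
    intro j y hy
    have := hasStrictDerivAt_invFunOn isOpen_Ioi (hmono j).injOn (hψmaps j hy)
      (((hφ j).contDiffAt (Ioi_mem_nhds (hψmaps j hy))).hasStrictDerivAt one_ne_zero)
      (hderiv j _ (hψmaps j hy)).ne'
    rwa [hφψ j hy] at this
  have hψcd : ∀ j {y : ℝ}, 0 < y → ContDiffAt ℝ 1 (ψ j) y := by
    intro j y hy
    have := contDiffAt_invFunOn isOpen_Ioi (hmono j).injOn (hψmaps j hy)
      ((hφ j).contDiffAt (Ioi_mem_nhds (hψmaps j hy))) one_ne_zero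
      (hderiv j _ (hψmaps j hy)).ne'
    rwa [hφψ j hy] at this
  obtain ⟨S, hS, hSprod⟩ := exists_contDiffOn_prod_eq (a := a)
    (fun j y hy => (hψcd j hy).contDiffWithinAt)
    (fun j y hy => (hψd j hy).hasDerivAt.deriv ▸ inv_pos.2 (hderiv j _ (hψmaps j hy)))
    hψsurj hψmaps
  have harg : ∀ j {t : ℝ}, 0 < t → 0 < S t * t ^ a j := fun j t ht => by
    have := (hSprod t ht).1; positivity
  refine ⟨fun j t => ψ j (S t * t ^ a j), S, fun j t ht => ?_,
    fun j t ht => hψmaps j (harg j ht), fun t ht => (hSprod t ht).2, fun j t ht => ?_⟩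
  · exact ((hψcd j (harg j ht)).comp t ((hS.contDiffAt (Ioi_mem_nhds ht)).mul
      (Real.contDiffAt_rpow_const_of_ne (ne_of_gt ht)))).contDiffWithinAt
  · simp only
    rw [hφψ j (harg j ht), Real.rpow_neg ht.le]
    field_simp

end Equalizer

theorem sigmaFn_eq_of_forall_eq {n : ℕ} [Nonempty (Fin n)] {pp : Fin n → ℝ}
    {φ : Fin n → ℝ → ℝ} (hφ : ∀ j, StrictMonoOn (φ j) (Ioi 0)) {d : Fin n → ℝ} {t s : ℝ}
    (hd : ∀ j, 0 < d j) (hprod : ∏ j, d j = t)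
    (heq : ∀ j, t ^ (-(pp j)⁻¹) * φ j (d j) = s) :
    sigmaFn pp φ t = s := by
  have ht : 0 < t := hprod ▸ Finset.prod_pos fun j _ => hd j
  refine IsLeast.csInf_eq ⟨⟨d, hd, hprod, by simp only [heq, ciSup_const]⟩, ?_⟩
  rintro _ ⟨d', hd', hprod', rfl⟩
  by_contra! hlt
  have hlt' : ∀ j, d' j < d j := fun j => by
    refine (hφ j).lt_iff_lt (hd' j) (hd j) |>.mp
      (lt_of_mul_lt_mul_left ?_ (by positivity : 0 ≤ t ^ (-(pp j)⁻¹)))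
    rw [heq j]
    exact (le_ciSup (Finite.bddAbove_range _) j).trans_lt hlt
  exact (Finset.prod_lt_prod_of_nonempty (fun j _ => hd' j) (fun j _ => hlt' j)
    Finset.univ_nonempty).ne (hprod'.trans hprod.symm)

theorem lt_of_le_half_iInf_beta_mul {n : ℕ} [Nonempty (Fin n)] {rr pp β : Fin n → ℝ}
    {r p δ : ℝ} (hrr : ∀ j, 0 < rr j)
    (hrdef : r = (n : ℝ) / ∑ j, (rr j)⁻¹)
    (hpdef : p = ((n : ℝ) / r) / ∑ j, (pp j * rr j)⁻¹)
    (hβdef : ∀ j, β j = (rr j)⁻¹ * (r / n + (pp j)⁻¹ - p⁻¹))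
    (hδ : δ ≤ (1 / 2) * ⨅ j, β j * rr j) (j : Fin n) : δ < rr j := by
  have hS : 0 < ∑ j, (rr j)⁻¹ :=
    Finset.sum_pos (fun j _ => inv_pos.2 (hrr j)) Finset.univ_nonempty
  have hn : (0 : ℝ) < n := Nat.cast_pos.2 (Fin.pos_iff_nonempty.2 ‹_›)
  have hrn : r / n = (∑ j, (rr j)⁻¹)⁻¹ := by rw [hrdef]; field_simp
  have hp : ∑ j, (pp j * rr j)⁻¹ = ∑ j, p⁻¹ * (rr j)⁻¹ := by
    rw [← Finset.mul_sum, hpdef, inv_div, div_div_eq_mul_div, mul_div_assoc, hrn, mul_assoc,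
      inv_mul_cancel₀ hS.ne', mul_one]
  obtain ⟨i, -, hi⟩ := Finset.exists_le_of_sum_le Finset.univ_nonempty hp.le
  have hpi : (pp i)⁻¹ ≤ p⁻¹ := by
    rw [mul_inv] at hi
    exact le_of_mul_le_mul_right hi (inv_pos.2 (hrr i))
  have hβi : β i * rr i ≤ r / n := by
    rw [hβdef i, mul_comm, ← mul_assoc, mul_inv_cancel₀ (hrr i).ne', one_mul]
    linarith
  have hrnj : r / n ≤ rr j := by
    rw [hrn]
    exact inv_le_of_inv_le₀ (hrr j)
      (Finset.single_le_sum (fun i _ => (inv_pos.2 (hrr i)).le) (Finset.mem_univ j))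
  have := (ciInf_le (f := fun j => β j * rr j) (Finite.bddBelow_range _) i).trans hβi
  have : 0 < r / n := hrn ▸ inv_pos.2 hS
  linarith

theorem stmt3_general (n : ℕ) (hn : 0 < n) (rr pp : Fin n → ℝ)
    (hrr : ∀ j, 0 < rr j)
    (r p : ℝ) (β : Fin n → ℝ)
    (hrdef : r = (n : ℝ) / ∑ j, (rr j)⁻¹)
    (hpdef : p = ((n : ℝ) / r) / ∑ j, (pp j * rr j)⁻¹)
    (hβdef : ∀ j, β j = (rr j)⁻¹ * (r / n + (pp j)⁻¹ - p⁻¹))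
    (δ : ℝ) (hδ' : δ ≤ (1 / 2) * ⨅ j, β j * rr j)
    (φ : Fin n → ℝ → ℝ)
    (hφpos : ∀ j t, 0 < t → 0 < φ j t)
    (hφmono : ∀ j, StrictMonoOn (φ j) (Set.Ioi 0))
    (hφC1 : ∀ j, ContDiffOn ℝ 1 (φ j) (Set.Ioi 0))
    (hφup : ∀ j, MonotoneOn (fun t => φ j t * t ^ (-(rr j) + δ)) (Set.Ioi 0)) :
    ∃ δfun : Fin n → ℝ → ℝ,
      (∀ j, ContDiffOn ℝ 1 (δfun j) (Set.Ioi 0)) ∧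
      (∀ j t, 0 < t → 0 < δfun j t) ∧
      (∀ t, 0 < t → (∏ j, δfun j t) = t) ∧
      (∀ j t, 0 < t → sigmaFn pp φ t = t ^ (-(pp j)⁻¹) * φ j (δfun j t)) := by
  have : Nonempty (Fin n) := ⟨⟨0, hn⟩⟩
  have hc : ∀ j, 0 < rr j - δ := fun j =>
    sub_pos.2 (lt_of_le_half_iInf_beta_mul hrr hrdef hpdef hβdef hδ' j)
  have hup : ∀ j, MonotoneOn (fun t => φ j t * t ^ (-(rr j - δ))) (Ioi 0) := fun j => by
    simpa only [neg_sub, neg_add_eq_sub] using hφup j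
  obtain ⟨d, S, hd, hdpos, hdprod, hdeq⟩ :=
    exists_contDiffOn_equalizer (a := fun j => (pp j)⁻¹) hφC1 hφmono
      (fun j t ht => hφpos j t ht)
      (fun j => surjOn_Ioi_of_monotoneOn_mul_rpow_neg (hc j) (hφpos j) (hup j)
        (hφC1 j).continuousOn)
      (fun j x hx => pos_of_hasDerivAt_of_monotoneOn_mul_rpow_neg (hc j) (hφpos j) (hup j) hx
        (((hφC1 j).contDiffAt (Ioi_mem_nhds hx)).differentiableAt one_ne_zero).hasDerivAt)
  refine ⟨d, hd, hdpos, hdprod, fun j t ht => ?_⟩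
  rw [sigmaFn_eq_of_forall_eq hφmono (fun i => hdpos i t ht) (hdprod t ht)
    (fun i => hdeq i t ht), hdeq j t ht]

/-- Lemma 3(ii): existence of the `C¹` functions `δ_j(t)` equilibrating
the infimum defining `σ`. -/
theorem stmt3 (n : ℕ) (hn : 0 < n) (rr pp : Fin n → ℝ) (θθ : Fin n → ℝ≥0∞)
    (hrr : ∀ j, 0 < rr j) (hpp : ∀ j, 1 ≤ pp j) (hθθ : ∀ j, 1 ≤ θθ j)
    (r p : ℝ) (θ : ℝ≥0∞) (β : Fin n → ℝ)
    (hrdef : r = (n : ℝ) / ∑ j, (rr j)⁻¹)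
    (hpdef : p = ((n : ℝ) / r) / ∑ j, (pp j * rr j)⁻¹)
    (hθdef : θ = (ENNReal.ofReal ((r / n) * ∑ j, ((θθ j)⁻¹).toReal / rr j))⁻¹)
    (hβdef : ∀ j, β j = (rr j)⁻¹ * (r / n + (pp j)⁻¹ - p⁻¹))
    (hβ : ∀ j, 0 < β j)
    (δ : ℝ) (hδ : 0 < δ) (hδ' : δ ≤ (1 / 2) * ⨅ j, β j * rr j)
    (φ : Fin n → ℝ → ℝ)
    (hφpos : ∀ j t, 0 < t → 0 < φ j t)
    (hφmono : ∀ j, StrictMonoOn (φ j) (Set.Ioi 0))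
    (hφC1 : ∀ j, ContDiffOn ℝ 1 (φ j) (Set.Ioi 0))
    (hφint : ∀ j, calL (θθ j) (fun t => t ^ (-(rr j)) * φ j t) < ∞)
    (hφup : ∀ j, MonotoneOn (fun t => φ j t * t ^ (-(rr j) + δ)) (Set.Ioi 0))
    (hφdown : ∀ j, AntitoneOn (fun t => φ j t * t ^ (-(rr j) - δ)) (Set.Ioi 0)) :
    ∃ δfun : Fin n → ℝ → ℝ,
      (∀ j, ContDiffOn ℝ 1 (δfun j) (Set.Ioi 0)) ∧
      (∀ j t, 0 < t → 0 < δfun j t) ∧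
      (∀ t, 0 < t → (∏ j, δfun j t) = t) ∧
      (∀ j t, 0 < t → sigmaFn pp φ t = t ^ (-(pp j)⁻¹) * φ j (δfun j t)) :=
  stmt3_general n hn rr pp hrr r p β hrdef hpdef hβdef δ hδ' φ hφpos hφmono hφC1 hφup

end
end

section
/- Under the hypotheses and notation of the previous lemma (parameters r, p, θ, β_j with β_j > 0; 0 < δ ≤ (1/2)min_j{β_j r_j}; φ_j positive, strictly increasing, C¹, with t^{−r_j}φ_j(t) ∈ 𝓛^{θ_j}, φ_j(t)t^{−r_j+δ} increasing and φ_j(t)t^{−r_j−δ} decreasing; σ(t) = inf{max_j t^{−1/p_j}φ_j(δ_j) : δ_j > 0, ∏ δ_j = t}; and δ_j(t) the C¹ functions with ∏_j δ_j(t) = t and σ(t) = t^{−1/p_j}φ_j(δ_j(t))), the following monotonicity properties hold: t ↦ σ(t) t^{1/p − r/n + δ} is increasing, t ↦ σ(t) t^{1/p − r/n − δ} is decreasing, and for every j = 1,…,n, t ↦ δ_j(t) t^{−β_j/3} is increasing and t ↦ δ_j(t) t^{−3β_j} is decreasing. -/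
open MeasureTheory Set
open scoped ENNReal NNReal BigOperators

noncomputable section

private lemma rpow_split {s t : ℝ} (hs : 0 < s) (ht : 0 < t) (c : ℝ) :
    s ^ c = t ^ c * (s / t) ^ c := by
  rw [← Real.mul_rpow ht.le (div_pos hs ht).le, mul_comm t, div_mul_cancel₀ s ht.ne']

private lemma rpow_mul_rpow_neg {x : ℝ} (hx : 0 < x) (c : ℝ) : x ^ c * x ^ (-c) = 1 := by
  rw [← Real.rpow_add hx]; simp

private lemma rpow_swap {s t : ℝ} (hs : 0 < s) (ht : 0 < t) (e : ℝ) :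
    (t / s) ^ e = (s / t) ^ (-e) := by
  rw [Real.rpow_neg (div_pos hs ht).le, ← Real.inv_rpow (div_pos hs ht).le, inv_div]

private lemma ratio_mono {ψ : ℝ → ℝ} {e : ℝ}
    (h : MonotoneOn (fun u => ψ u * u ^ e) (Set.Ioi 0))
    {a b : ℝ} (ha : 0 < a) (hab : a ≤ b) :
    ψ a ≤ ψ b * (a / b) ^ (-e) := by
  have hb : 0 < b := lt_of_lt_of_le ha hab
  have h1 : ψ a * a ^ e ≤ ψ b * b ^ e := h (Set.mem_Ioi.mpr ha) (Set.mem_Ioi.mpr hb) hab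
  have hae : (0:ℝ) < a ^ e := Real.rpow_pos_of_pos ha e
  have hbe : (0:ℝ) < b ^ e := Real.rpow_pos_of_pos hb e
  have key : ψ b * (a / b) ^ (-e) * a ^ e = ψ b * b ^ e := by
    rw [Real.div_rpow ha.le hb.le, Real.rpow_neg ha.le, Real.rpow_neg hb.le]
    field_simp
  rw [← key] at h1
  exact le_of_mul_le_mul_right h1 hae

private lemma ratio_anti_upper {ψ : ℝ → ℝ} {e : ℝ}
    (h : AntitoneOn (fun u => ψ u * u ^ e) (Set.Ioi 0))
    {a b : ℝ} (ha : 0 < a) (hab : a ≤ b) :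
    ψ b ≤ ψ a * (b / a) ^ (-e) := by
  have hb : 0 < b := lt_of_lt_of_le ha hab
  have h1 : ψ b * b ^ e ≤ ψ a * a ^ e := h (Set.mem_Ioi.mpr ha) (Set.mem_Ioi.mpr hb) hab
  have hae : (0:ℝ) < a ^ e := Real.rpow_pos_of_pos ha e
  have hbe : (0:ℝ) < b ^ e := Real.rpow_pos_of_pos hb e
  have key : ψ a * (b / a) ^ (-e) * b ^ e = ψ a * a ^ e := by
    rw [Real.div_rpow hb.le ha.le, Real.rpow_neg ha.le, Real.rpow_neg hb.le]
    field_simp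
  rw [← key] at h1
  exact le_of_mul_le_mul_right h1 hbe

private lemma ratio_anti_lower {ψ : ℝ → ℝ} {e : ℝ}
    (h : AntitoneOn (fun u => ψ u * u ^ e) (Set.Ioi 0))
    {a b : ℝ} (ha : 0 < a) (hab : a ≤ b) :
    ψ b * (a / b) ^ (-e) ≤ ψ a := by
  have hb : 0 < b := lt_of_lt_of_le ha hab
  have h1 : ψ b * b ^ e ≤ ψ a * a ^ e := h (Set.mem_Ioi.mpr ha) (Set.mem_Ioi.mpr hb) hab
  have hae : (0:ℝ) < a ^ e := Real.rpow_pos_of_pos ha e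
  have hbe : (0:ℝ) < b ^ e := Real.rpow_pos_of_pos hb e
  have key : ψ b * (a / b) ^ (-e) * a ^ e = ψ b * b ^ e := by
    rw [Real.div_rpow ha.le hb.le, Real.rpow_neg ha.le, Real.rpow_neg hb.le]
    field_simp
  have h2 : ψ b * (a / b) ^ (-e) * a ^ e ≤ ψ a * a ^ e := by rw [key]; exact h1
  exact le_of_mul_le_mul_right h2 hae

private lemma sigma_le {n : ℕ} (hn : 0 < n) (pp : Fin n → ℝ) (φ : Fin n → ℝ → ℝ)
    (hφpos : ∀ j u, 0 < u → 0 < φ j u)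
    {t : ℝ} (ht : 0 < t) (d : Fin n → ℝ) (hd : ∀ j, 0 < d j) (hprod : (∏ j, d j) = t)
    {M : ℝ} (hM : ∀ j, t ^ (-(pp j)⁻¹) * φ j (d j) ≤ M) :
    sigmaFn pp φ t ≤ M := by
  haveI : Nonempty (Fin n) := Fin.pos_iff_nonempty.mp hn
  have hbdd : BddBelow {a : ℝ | ∃ d : Fin n → ℝ, (∀ j, 0 < d j) ∧ (∏ j, d j) = t ∧
      a = ⨆ j, t ^ (-(pp j)⁻¹) * φ j (d j)} := by
    refine ⟨0, ?_⟩
    rintro a ⟨e, he, hep, rfl⟩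
    have h0 : (0:ℝ) ≤ t ^ (-(pp ⟨0,hn⟩)⁻¹) * φ ⟨0,hn⟩ (e ⟨0,hn⟩) :=
      le_of_lt (mul_pos (Real.rpow_pos_of_pos ht _) (hφpos _ _ (he _)))
    exact le_trans h0 (le_ciSup (Set.Finite.bddAbove
      (Set.finite_range (fun j => t ^ (-(pp j)⁻¹) * φ j (e j)))) ⟨0,hn⟩)
  unfold sigmaFn
  exact le_trans (csInf_le hbdd ⟨d, hd, hprod, rfl⟩) (ciSup_le hM)


set_option maxHeartbeats 1000000 in
/-- Lemma 3(iii): monotonicity properties of `σ` and of the `δ_j`. -/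
theorem stmt4 (n : ℕ) (hn : 0 < n) (rr pp : Fin n → ℝ) (θθ : Fin n → ℝ≥0∞)
    (hrr : ∀ j, 0 < rr j) (hpp : ∀ j, 1 ≤ pp j) (hθθ : ∀ j, 1 ≤ θθ j)
    (r p : ℝ) (θ : ℝ≥0∞) (β : Fin n → ℝ)
    (hrdef : r = (n : ℝ) / ∑ j, (rr j)⁻¹)
    (hpdef : p = ((n : ℝ) / r) / ∑ j, (pp j * rr j)⁻¹)
    (hθdef : θ = (ENNReal.ofReal ((r / n) * ∑ j, ((θθ j)⁻¹).toReal / rr j))⁻¹)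
    (hβdef : ∀ j, β j = (rr j)⁻¹ * (r / n + (pp j)⁻¹ - p⁻¹))
    (hβ : ∀ j, 0 < β j)
    (δ : ℝ) (hδ : 0 < δ) (hδ' : δ ≤ (1 / 2) * ⨅ j, β j * rr j)
    (φ : Fin n → ℝ → ℝ)
    (hφpos : ∀ j t, 0 < t → 0 < φ j t)
    (hφmono : ∀ j, StrictMonoOn (φ j) (Set.Ioi 0))
    (hφC1 : ∀ j, ContDiffOn ℝ 1 (φ j) (Set.Ioi 0))
    (hφint : ∀ j, calL (θθ j) (fun t => t ^ (-(rr j)) * φ j t) < ∞)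
    (hφup : ∀ j, MonotoneOn (fun t => φ j t * t ^ (-(rr j) + δ)) (Set.Ioi 0))
    (hφdown : ∀ j, AntitoneOn (fun t => φ j t * t ^ (-(rr j) - δ)) (Set.Ioi 0))
    (δfun : Fin n → ℝ → ℝ)
    (hdC1 : ∀ j, ContDiffOn ℝ 1 (δfun j) (Set.Ioi 0))
    (hdpos : ∀ j t, 0 < t → 0 < δfun j t)
    (hdprod : ∀ t, 0 < t → (∏ j, δfun j t) = t)
    (hdσ : ∀ j t, 0 < t → sigmaFn pp φ t = t ^ (-(pp j)⁻¹) * φ j (δfun j t)) :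
    MonotoneOn (fun t => sigmaFn pp φ t * t ^ (p⁻¹ - r / n + δ)) (Set.Ioi 0) ∧
    AntitoneOn (fun t => sigmaFn pp φ t * t ^ (p⁻¹ - r / n - δ)) (Set.Ioi 0) ∧
    (∀ j, MonotoneOn (fun t => δfun j t * t ^ (-(β j) / 3)) (Set.Ioi 0) ∧
          AntitoneOn (fun t => δfun j t * t ^ (-(3 * β j))) (Set.Ioi 0)) := by
  haveI hne : Nonempty (Fin n) := Fin.pos_iff_nonempty.mp hn
  have hn0 : (n : ℝ) ≠ 0 := Nat.cast_ne_zero.mpr hn.ne'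
  have hSr : 0 < ∑ j, (rr j)⁻¹ :=
    Finset.sum_pos (fun j _ => inv_pos.mpr (hrr j)) Finset.univ_nonempty
  have hr : 0 < r := by rw [hrdef]; positivity
  have hrn : r / (n : ℝ) * ∑ j, (rr j)⁻¹ = 1 := by
    rw [hrdef, div_div, div_mul_eq_mul_div, mul_comm]
    exact div_self (by positivity)
  have hSpr : 0 < ∑ j, (pp j * rr j)⁻¹ :=
    Finset.sum_pos (fun j _ => inv_pos.mpr (mul_pos (lt_of_lt_of_le one_pos (hpp j)) (hrr j)))
      Finset.univ_nonempty
  have hpinv : p⁻¹ = r / (n : ℝ) * ∑ j, (pp j * rr j)⁻¹ := by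
    rw [hpdef]
    field_simp
  have hsumβ : ∑ j, β j = 1 := by
    calc ∑ j, β j
        = ∑ j, (r / (n:ℝ) * (rr j)⁻¹ + ((pp j * rr j)⁻¹ - p⁻¹ * (rr j)⁻¹)) := by
          refine Finset.sum_congr rfl (fun j _ => ?_)
          rw [hβdef j, mul_inv]; ring
      _ = r / (n:ℝ) * ∑ j, (rr j)⁻¹ +
          (∑ j, (pp j * rr j)⁻¹ - p⁻¹ * ∑ j, (rr j)⁻¹) := by
          rw [Finset.sum_add_distrib, Finset.sum_sub_distrib, Finset.mul_sum, Finset.mul_sum]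
      _ = 1 := by
          rw [hpinv]
          linear_combination (1 - ∑ j, (pp j * rr j)⁻¹) * hrn
  have hβle1 : ∀ j, β j ≤ 1 := by
    intro j
    rw [← hsumβ]
    exact Finset.single_le_sum (fun k _ => (hβ k).le) (Finset.mem_univ j)
  have hδβ : ∀ j, δ ≤ β j * rr j / 2 := by
    intro j
    have h1 : (⨅ k, β k * rr k) ≤ β j * rr j :=
      ciInf_le (Set.Finite.bddBelow (Set.finite_range _)) j
    linarith [hδ']
  have hδr : ∀ j, δ < rr j := by
    intro j
    nlinarith [hδβ j, mul_le_mul_of_nonneg_right (hβle1 j) (hrr j).le, hrr j]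
  have hβrr : ∀ j, β j * rr j = r / (n:ℝ) + (pp j)⁻¹ - p⁻¹ := by
    intro j
    rw [hβdef j, inv_mul_eq_div, div_mul_cancel₀ _ (hrr j).ne']
  -- Key inequality A : σ(s) ≤ σ(t) (s/t)^(r/n - 1/p - δ) for 0 < s ≤ t
  have keyA : ∀ s t : ℝ, 0 < s → s ≤ t →
      sigmaFn pp φ s ≤ sigmaFn pp φ t * (s / t) ^ (r / (n:ℝ) - p⁻¹ - δ) := by
    intro s t hs hst
    have ht : 0 < t := lt_of_lt_of_le hs hst
    have hx0 : 0 < s / t := div_pos hs ht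
    have hx1 : s / t ≤ 1 := (div_le_one ht).mpr hst
    set x := s / t with hxdef
    set γ : Fin n → ℝ := fun j => (β j * rr j - δ) / (rr j - δ) with hγdef
    have hγpos : ∀ j, 0 < γ j := by
      intro j
      exact div_pos (by nlinarith [hδβ j, hβ j, hrr j]) (by linarith [hδr j])
    have hγβ : ∀ j, γ j ≤ β j := by
      intro j
      rw [div_le_iff₀ (by linarith [hδr j] : (0:ℝ) < rr j - δ)]
      nlinarith [mul_le_mul_of_nonneg_left (hβle1 j) hδ.le]
    have hS0 : 0 < ∑ k, γ k := Finset.sum_pos (fun k _ => hγpos k) Finset.univ_nonempty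
    set S := ∑ k, γ k with hSdef
    have hS1 : S ≤ 1 := by
      rw [← hsumβ]; exact Finset.sum_le_sum (fun k _ => hγβ k)
    set γ' : Fin n → ℝ := fun j => γ j / S with hγ'def
    have hγ'pos : ∀ j, 0 < γ' j := fun j => div_pos (hγpos j) hS0
    have hγ'ge : ∀ j, γ j ≤ γ' j := by
      intro j
      rw [le_div_iff₀ hS0]
      nlinarith [hγpos j]
    have hγ'sum : ∑ j, γ' j = 1 := by
      show (∑ j, γ j / S) = 1
      rw [← Finset.sum_div]
      exact div_self hS0.ne'
    set d' : Fin n → ℝ := fun j => δfun j t * x ^ γ' j with hd'def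
    have hd'pos : ∀ j, 0 < d' j := fun j =>
      mul_pos (hdpos j t ht) (Real.rpow_pos_of_pos hx0 _)
    have hd'le : ∀ j, d' j ≤ δfun j t := by
      intro j
      have h1 := Real.rpow_le_one hx0.le hx1 (hγ'pos j).le
      have h2 := hdpos j t ht
      show δfun j t * x ^ γ' j ≤ δfun j t
      nlinarith
    have hd'prod : (∏ j, d' j) = s := by
      show (∏ j, δfun j t * x ^ γ' j) = s
      rw [Finset.prod_mul_distrib, hdprod t ht, ← Real.rpow_sum_of_pos hx0, hγ'sum,
        Real.rpow_one, hxdef, mul_comm, div_mul_cancel₀ s ht.ne']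
    apply sigma_le hn pp φ hφpos hs d' hd'pos hd'prod
    intro j
    have hdt := hdpos j t ht
    have hφdt := hφpos j _ hdt
    have h2 : φ j (d' j) ≤ φ j (δfun j t) * (d' j / δfun j t) ^ (rr j - δ) := by
      have h := ratio_mono (hφup j) (hd'pos j) (hd'le j)
      have he : -(-(rr j) + δ) = rr j - δ := by ring
      rwa [he] at h
    have hratio : d' j / δfun j t = x ^ γ' j := by
      show δfun j t * x ^ γ' j / δfun j t = x ^ γ' j
      exact mul_div_cancel_left₀ _ hdt.ne'
    have h3 : (x ^ γ' j) ^ (rr j - δ) = x ^ (γ' j * (rr j - δ)) :=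
      (Real.rpow_mul hx0.le _ _).symm
    have h4 : x ^ (γ' j * (rr j - δ)) ≤ x ^ (β j * rr j - δ) := by
      apply Real.rpow_le_rpow_of_exponent_ge hx0 hx1
      have hγval : γ j * (rr j - δ) = β j * rr j - δ :=
        div_mul_cancel₀ _ (by linarith [hδr j] : rr j - δ ≠ 0)
      nlinarith [hγ'ge j, hδr j]
    have h5 : φ j (d' j) ≤ φ j (δfun j t) * x ^ (β j * rr j - δ) := by
      calc φ j (d' j) ≤ φ j (δfun j t) * (d' j / δfun j t) ^ (rr j - δ) := h2
        _ = φ j (δfun j t) * x ^ (γ' j * (rr j - δ)) := by rw [hratio, h3]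
        _ ≤ φ j (δfun j t) * x ^ (β j * rr j - δ) := mul_le_mul_of_nonneg_left h4 hφdt.le
    have hseq : s = t * x := by rw [hxdef, mul_comm, div_mul_cancel₀ s ht.ne']
    calc s ^ (-(pp j)⁻¹) * φ j (d' j)
        ≤ s ^ (-(pp j)⁻¹) * (φ j (δfun j t) * x ^ (β j * rr j - δ)) :=
          mul_le_mul_of_nonneg_left h5 (Real.rpow_nonneg hs.le _)
      _ = (t ^ (-(pp j)⁻¹) * φ j (δfun j t)) * (x ^ (-(pp j)⁻¹) * x ^ (β j * rr j - δ)) := by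
          rw [hseq, Real.mul_rpow ht.le hx0.le]; ring
      _ = sigmaFn pp φ t * x ^ (r / (n:ℝ) - p⁻¹ - δ) := by
          rw [← Real.rpow_add hx0, ← hdσ j t ht,
            show -(pp j)⁻¹ + (β j * rr j - δ) = r / (n:ℝ) - p⁻¹ - δ from by rw [hβrr j]; ring]
  -- Key inequality B : σ(t) ≤ σ(s) (t/s)^(r/n - 1/p + δ) for 0 < s ≤ t
  have keyB : ∀ s t : ℝ, 0 < s → s ≤ t →
      sigmaFn pp φ t ≤ sigmaFn pp φ s * (t / s) ^ (r / (n:ℝ) - p⁻¹ + δ) := by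
    intro s t hs hst
    have ht : 0 < t := lt_of_lt_of_le hs hst
    have hy0 : 0 < t / s := div_pos ht hs
    have hy1 : 1 ≤ t / s := (one_le_div hs).mpr hst
    set y := t / s with hydef
    set γ : Fin n → ℝ := fun j => (β j * rr j + δ) / (rr j + δ) with hγdef
    have hγpos : ∀ j, 0 < γ j := by
      intro j
      exact div_pos (add_pos (mul_pos (hβ j) (hrr j)) hδ) (add_pos (hrr j) hδ)
    have hγβ : ∀ j, β j ≤ γ j := by
      intro j
      rw [le_div_iff₀ (by linarith [hrr j, hδ] : (0:ℝ) < rr j + δ)]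
      nlinarith [mul_le_mul_of_nonneg_left (hβle1 j) hδ.le]
    have hS0 : 0 < ∑ k, γ k := Finset.sum_pos (fun k _ => hγpos k) Finset.univ_nonempty
    set S := ∑ k, γ k with hSdef
    have hS1 : 1 ≤ S := by
      rw [← hsumβ]; exact Finset.sum_le_sum (fun k _ => hγβ k)
    set γ' : Fin n → ℝ := fun j => γ j / S with hγ'def
    have hγ'pos : ∀ j, 0 < γ' j := fun j => div_pos (hγpos j) hS0
    have hγ'le : ∀ j, γ' j ≤ γ j := by
      intro j
      rw [div_le_iff₀ hS0]
      nlinarith [hγpos j]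
    have hγ'sum : ∑ j, γ' j = 1 := by
      show (∑ j, γ j / S) = 1
      rw [← Finset.sum_div]
      exact div_self hS0.ne'
    set d' : Fin n → ℝ := fun j => δfun j s * y ^ γ' j with hd'def
    have hds : ∀ j, 0 < δfun j s := fun j => hdpos j s hs
    have hd'pos : ∀ j, 0 < d' j := fun j =>
      mul_pos (hds j) (Real.rpow_pos_of_pos hy0 _)
    have hd'ge : ∀ j, δfun j s ≤ d' j := by
      intro j
      have h1 : 1 ≤ y ^ γ' j := Real.one_le_rpow hy1 (hγ'pos j).le
      show δfun j s ≤ δfun j s * y ^ γ' j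
      nlinarith [hds j]
    have hd'prod : (∏ j, d' j) = t := by
      show (∏ j, δfun j s * y ^ γ' j) = t
      rw [Finset.prod_mul_distrib, hdprod s hs, ← Real.rpow_sum_of_pos hy0, hγ'sum,
        Real.rpow_one, hydef, mul_comm, div_mul_cancel₀ t hs.ne']
    apply sigma_le hn pp φ hφpos ht d' hd'pos hd'prod
    intro j
    have hφds := hφpos j _ (hds j)
    have h2 : φ j (d' j) ≤ φ j (δfun j s) * (d' j / δfun j s) ^ (rr j + δ) := by
      have h := ratio_anti_upper (hφdown j) (hds j) (hd'ge j)
      have he : -(-(rr j) - δ) = rr j + δ := by ring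
      rwa [he] at h
    have hratio : d' j / δfun j s = y ^ γ' j := by
      show δfun j s * y ^ γ' j / δfun j s = y ^ γ' j
      exact mul_div_cancel_left₀ _ (hds j).ne'
    have h3 : (y ^ γ' j) ^ (rr j + δ) = y ^ (γ' j * (rr j + δ)) :=
      (Real.rpow_mul hy0.le _ _).symm
    have h4 : y ^ (γ' j * (rr j + δ)) ≤ y ^ (β j * rr j + δ) := by
      apply Real.rpow_le_rpow_of_exponent_le hy1
      have hγval : γ j * (rr j + δ) = β j * rr j + δ :=
        div_mul_cancel₀ _ (add_pos (hrr j) hδ).ne'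
      nlinarith [hγ'le j, hrr j, hδ]
    have h5 : φ j (d' j) ≤ φ j (δfun j s) * y ^ (β j * rr j + δ) := by
      calc φ j (d' j) ≤ φ j (δfun j s) * (d' j / δfun j s) ^ (rr j + δ) := h2
        _ = φ j (δfun j s) * y ^ (γ' j * (rr j + δ)) := by rw [hratio, h3]
        _ ≤ φ j (δfun j s) * y ^ (β j * rr j + δ) := mul_le_mul_of_nonneg_left h4 hφds.le
    have hteq : t = s * y := by rw [hydef, mul_comm, div_mul_cancel₀ t hs.ne']
    calc t ^ (-(pp j)⁻¹) * φ j (d' j)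
        ≤ t ^ (-(pp j)⁻¹) * (φ j (δfun j s) * y ^ (β j * rr j + δ)) :=
          mul_le_mul_of_nonneg_left h5 (Real.rpow_nonneg ht.le _)
      _ = (s ^ (-(pp j)⁻¹) * φ j (δfun j s)) * (y ^ (-(pp j)⁻¹) * y ^ (β j * rr j + δ)) := by
          rw [hteq, Real.mul_rpow hs.le hy0.le]; ring
      _ = sigmaFn pp φ s * y ^ (r / (n:ℝ) - p⁻¹ + δ) := by
          rw [← Real.rpow_add hy0, ← hdσ j s hs,
            show -(pp j)⁻¹ + (β j * rr j + δ) = r / (n:ℝ) - p⁻¹ + δ from by rw [hβrr j]; ring]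
  refine ⟨?_, ?_, ?_⟩
  · -- σ(t) t^(1/p - r/n + δ) increasing
    intro s hs t ht hst
    have hs' : (0:ℝ) < s := hs
    have ht' : (0:ℝ) < t := ht
    have hx0 : 0 < s / t := div_pos hs' ht'
    dsimp only
    calc sigmaFn pp φ s * s ^ (p⁻¹ - r / (n:ℝ) + δ)
        ≤ sigmaFn pp φ t * (s / t) ^ (r / (n:ℝ) - p⁻¹ - δ) * s ^ (p⁻¹ - r / (n:ℝ) + δ) :=
          mul_le_mul_of_nonneg_right (keyA s t hs' hst) (Real.rpow_nonneg hs'.le _)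
      _ = sigmaFn pp φ t * t ^ (p⁻¹ - r / (n:ℝ) + δ) *
          ((s / t) ^ (r / (n:ℝ) - p⁻¹ - δ) * (s / t) ^ (p⁻¹ - r / (n:ℝ) + δ)) := by
          rw [rpow_split hs' ht' (p⁻¹ - r / (n:ℝ) + δ)]; ring
      _ = sigmaFn pp φ t * t ^ (p⁻¹ - r / (n:ℝ) + δ) := by
          rw [← Real.rpow_add hx0,
            show (r / (n:ℝ) - p⁻¹ - δ) + (p⁻¹ - r / (n:ℝ) + δ) = 0 from by ring,
            Real.rpow_zero, mul_one]
  · -- σ(t) t^(1/p - r/n - δ) decreasing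
    intro s hs t ht hst
    have hs' : (0:ℝ) < s := hs
    have ht' : (0:ℝ) < t := ht
    have hy0 : 0 < t / s := div_pos ht' hs'
    dsimp only
    calc sigmaFn pp φ t * t ^ (p⁻¹ - r / (n:ℝ) - δ)
        ≤ sigmaFn pp φ s * (t / s) ^ (r / (n:ℝ) - p⁻¹ + δ) * t ^ (p⁻¹ - r / (n:ℝ) - δ) :=
          mul_le_mul_of_nonneg_right (keyB s t hs' hst) (Real.rpow_nonneg ht'.le _)
      _ = sigmaFn pp φ s * s ^ (p⁻¹ - r / (n:ℝ) - δ) *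
          ((t / s) ^ (r / (n:ℝ) - p⁻¹ + δ) * (t / s) ^ (p⁻¹ - r / (n:ℝ) - δ)) := by
          rw [rpow_split ht' hs' (p⁻¹ - r / (n:ℝ) - δ)]; ring
      _ = sigmaFn pp φ s * s ^ (p⁻¹ - r / (n:ℝ) - δ) := by
          rw [← Real.rpow_add hy0,
            show (r / (n:ℝ) - p⁻¹ + δ) + (p⁻¹ - r / (n:ℝ) - δ) = 0 from by ring,
            Real.rpow_zero, mul_one]
  · -- the δ_j
    intro j
    have ephi : ∀ u : ℝ, 0 < u → φ j (δfun j u) = sigmaFn pp φ u * u ^ ((pp j)⁻¹) := by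
      intro u hu
      rw [hdσ j u hu, mul_right_comm, ← Real.rpow_add hu]
      simp
    have hphiup : ∀ s t : ℝ, 0 < s → s ≤ t →
        φ j (δfun j s) ≤ φ j (δfun j t) * (s / t) ^ (β j * rr j - δ) := by
      intro s t hs hst
      have ht : 0 < t := lt_of_lt_of_le hs hst
      have hx0 : 0 < s / t := div_pos hs ht
      calc φ j (δfun j s) = sigmaFn pp φ s * s ^ ((pp j)⁻¹) := ephi s hs
        _ ≤ sigmaFn pp φ t * (s / t) ^ (r / (n:ℝ) - p⁻¹ - δ) * s ^ ((pp j)⁻¹) :=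
            mul_le_mul_of_nonneg_right (keyA s t hs hst) (Real.rpow_nonneg hs.le _)
        _ = (sigmaFn pp φ t * t ^ ((pp j)⁻¹)) *
            ((s / t) ^ (r / (n:ℝ) - p⁻¹ - δ) * (s / t) ^ ((pp j)⁻¹)) := by
            rw [rpow_split hs ht ((pp j)⁻¹)]; ring
        _ = φ j (δfun j t) * (s / t) ^ (β j * rr j - δ) := by
            rw [← Real.rpow_add hx0, ← ephi t ht,
              show r / (n:ℝ) - p⁻¹ - δ + (pp j)⁻¹ = β j * rr j - δ from by rw [hβrr j]; ring]
    have hphidown : ∀ s t : ℝ, 0 < s → s ≤ t →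
        φ j (δfun j t) * (s / t) ^ (β j * rr j + δ) ≤ φ j (δfun j s) := by
      intro s t hs hst
      have ht : 0 < t := lt_of_lt_of_le hs hst
      have hx0 : 0 < s / t := div_pos hs ht
      have hy0 : 0 < t / s := div_pos ht hs
      have step : φ j (δfun j t) ≤ φ j (δfun j s) * (t / s) ^ (β j * rr j + δ) := by
        calc φ j (δfun j t) = sigmaFn pp φ t * t ^ ((pp j)⁻¹) := ephi t ht
          _ ≤ sigmaFn pp φ s * (t / s) ^ (r / (n:ℝ) - p⁻¹ + δ) * t ^ ((pp j)⁻¹) :=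
              mul_le_mul_of_nonneg_right (keyB s t hs hst) (Real.rpow_nonneg ht.le _)
          _ = (sigmaFn pp φ s * s ^ ((pp j)⁻¹)) *
              ((t / s) ^ (r / (n:ℝ) - p⁻¹ + δ) * (t / s) ^ ((pp j)⁻¹)) := by
              rw [rpow_split ht hs ((pp j)⁻¹)]; ring
          _ = φ j (δfun j s) * (t / s) ^ (β j * rr j + δ) := by
              rw [← Real.rpow_add hy0, ← ephi s hs,
                show r / (n:ℝ) - p⁻¹ + δ + (pp j)⁻¹ = β j * rr j + δ from by rw [hβrr j]; ring]
      calc φ j (δfun j t) * (s / t) ^ (β j * rr j + δ)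
          ≤ φ j (δfun j s) * (t / s) ^ (β j * rr j + δ) * (s / t) ^ (β j * rr j + δ) :=
            mul_le_mul_of_nonneg_right step (Real.rpow_nonneg hx0.le _)
        _ = φ j (δfun j s) := by
            rw [rpow_swap hs ht (β j * rr j + δ), mul_assoc, ← Real.rpow_add hx0,
              show -(β j * rr j + δ) + (β j * rr j + δ) = 0 from by ring,
              Real.rpow_zero, mul_one]
    constructor
    · -- δ_j(t) t^(-β_j/3) increasing
      intro s hs t ht hst
      have hs' : (0:ℝ) < s := hs
      have ht' : (0:ℝ) < t := ht
      have hx0 : 0 < s / t := div_pos hs' ht'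
      have hx1 : s / t ≤ 1 := (div_le_one ht').mpr hst
      have hdt := hdpos j t ht'
      have hds := hdpos j s hs'
      dsimp only
      have hmain : δfun j s ≤ δfun j t * (s / t) ^ (β j / 3) := by
        by_contra hcon
        push_neg at hcon
        have hc0 : 0 < δfun j t * (s / t) ^ (β j / 3) :=
          mul_pos hdt (Real.rpow_pos_of_pos hx0 _)
        have hcd : δfun j t * (s / t) ^ (β j / 3) ≤ δfun j t := by
          nlinarith [Real.rpow_le_one hx0.le hx1 (div_nonneg (hβ j).le (by norm_num : (0:ℝ) ≤ 3)), hdt]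
        have hlt : φ j (δfun j t * (s / t) ^ (β j / 3)) < φ j (δfun j s) :=
          hφmono j (Set.mem_Ioi.mpr hc0) (Set.mem_Ioi.mpr hds) hcon
        have hlow : φ j (δfun j t) *
            ((δfun j t * (s / t) ^ (β j / 3)) / δfun j t) ^ (rr j + δ)
            ≤ φ j (δfun j t * (s / t) ^ (β j / 3)) := by
          have h := ratio_anti_lower (hφdown j) hc0 hcd
          have he : -(-(rr j) - δ) = rr j + δ := by ring
          rwa [he] at h
        rw [mul_div_cancel_left₀ _ hdt.ne', ← Real.rpow_mul hx0.le] at hlow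
        have hexp : (s / t) ^ (β j * rr j - δ) ≤ (s / t) ^ (β j / 3 * (rr j + δ)) := by
          apply Real.rpow_le_rpow_of_exponent_ge hx0 hx1
          nlinarith [hδβ j, mul_le_mul_of_nonneg_left (hβle1 j) hδ.le, hβ j, hrr j]
        have hup := hphiup s t hs' hst
        have hφdtpos := hφpos j _ hdt
        nlinarith [mul_le_mul_of_nonneg_left hexp hφdtpos.le]
      calc δfun j s * s ^ (-(β j) / 3)
          ≤ (δfun j t * (s / t) ^ (β j / 3)) * s ^ (-(β j) / 3) :=
            mul_le_mul_of_nonneg_right hmain (Real.rpow_nonneg hs'.le _)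
        _ = δfun j t * t ^ (-(β j) / 3) * ((s / t) ^ (β j / 3) * (s / t) ^ (-(β j) / 3)) := by
            rw [rpow_split hs' ht' (-(β j) / 3)]; ring
        _ = δfun j t * t ^ (-(β j) / 3) := by
            rw [← Real.rpow_add hx0,
              show β j / 3 + -(β j) / 3 = 0 from by ring, Real.rpow_zero, mul_one]
    · -- δ_j(t) t^(-3β_j) decreasing
      intro s hs t ht hst
      have hs' : (0:ℝ) < s := hs
      have ht' : (0:ℝ) < t := ht
      have hx0 : 0 < s / t := div_pos hs' ht'
      have hx1 : s / t ≤ 1 := (div_le_one ht').mpr hst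
      have hdt := hdpos j t ht'
      have hds := hdpos j s hs'
      dsimp only
      have hmain : δfun j t * (s / t) ^ (3 * β j) ≤ δfun j s := by
        by_contra hcon
        push_neg at hcon
        have hc0 : 0 < δfun j t * (s / t) ^ (3 * β j) :=
          mul_pos hdt (Real.rpow_pos_of_pos hx0 _)
        have hcd : δfun j t * (s / t) ^ (3 * β j) ≤ δfun j t := by
          nlinarith [Real.rpow_le_one hx0.le hx1
            (by linarith [hβ j] : (0:ℝ) ≤ 3 * β j), hdt]
        have hlt : φ j (δfun j s) < φ j (δfun j t * (s / t) ^ (3 * β j)) :=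
          hφmono j (Set.mem_Ioi.mpr hds) (Set.mem_Ioi.mpr hc0) hcon
        have hupc : φ j (δfun j t * (s / t) ^ (3 * β j)) ≤ φ j (δfun j t) *
            ((δfun j t * (s / t) ^ (3 * β j)) / δfun j t) ^ (rr j - δ) := by
          have h := ratio_mono (hφup j) hc0 hcd
          have he : -(-(rr j) + δ) = rr j - δ := by ring
          rwa [he] at h
        rw [mul_div_cancel_left₀ _ hdt.ne', ← Real.rpow_mul hx0.le] at hupc
        have hexp : (s / t) ^ (3 * β j * (rr j - δ)) ≤ (s / t) ^ (β j * rr j + δ) := by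
          apply Real.rpow_le_rpow_of_exponent_ge hx0 hx1
          nlinarith [hδβ j, mul_le_mul_of_nonneg_left (hβle1 j) hδ.le, hβ j, hrr j]
        have hdn := hphidown s t hs' hst
        have hφdtpos := hφpos j _ hdt
        nlinarith [mul_le_mul_of_nonneg_left hexp hφdtpos.le]
      calc δfun j t * t ^ (-(3 * β j))
          = (δfun j t * (s / t) ^ (3 * β j)) * s ^ (-(3 * β j)) := by
            rw [rpow_split hs' ht' (-(3 * β j)),
              show δfun j t * (s / t) ^ (3 * β j) * (t ^ (-(3 * β j)) * (s / t) ^ (-(3 * β j)))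
                = δfun j t * t ^ (-(3 * β j)) * ((s / t) ^ (3 * β j) * (s / t) ^ (-(3 * β j)))
                from by ring,
              rpow_mul_rpow_neg hx0, mul_one]
        _ ≤ δfun j s * s ^ (-(3 * β j)) :=
            mul_le_mul_of_nonneg_right hmain (Real.rpow_nonneg hs'.le _)


end
end

section
/- Under the hypotheses and notation of the previous lemma (parameters r, p, θ, β_j with β_j > 0; 0 < δ ≤ (1/2)min_j{β_j r_j}; φ_j positive, strictly increasing, C¹, with t^{−r_j}φ_j(t) ∈ 𝓛^{θ_j}, φ_j(t)t^{−r_j+δ} increasing and φ_j(t)t^{−r_j−δ} decreasing; σ(t) = inf{max_j t^{−1/p_j}φ_j(δ_j) : δ_j > 0, ∏ δ_j = t}; and δ_j(t) the C¹ functions with ∏_j δ_j(t) = t and σ(t) = t^{−1/p_j}φ_j(δ_j(t))), for every j = 1,…,n there holds (∫₀^∞ [φ_j(δ_j(t))/δ_j(t)^{r_j}]^{θ_j} dt/t)^{1/θ_j} ≤ c ‖t^{−r_j}φ_j(t)‖_{𝓛^{θ_j}}, where c depends only on δ, r_j, p_j and n. -/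
/-!
Write `c₀ = r/n - 1/p`, so that `β_i r_i - 1/p_i = c₀` and `∑ β_i = 1`. Bounding `σ(t)` by the
value of its defining infimum at the splitting `(t/s)^{β_i} δ_i(s)` of `t`, and using that
`φ_i(u) u^{-r_i+δ}` increases, shows that `σ(t) t^{δ-c₀}` is increasing. As
`σ(t) = t^{-1/p_j} φ_j(δ_j(t))`, so is `φ_j(δ_j(t)) t^{-(β_j r_j - δ)}`; since `φ_j` increases
and `φ_j(u) u^{-r_j-δ}` decreases, `δ_j(t) t^{-a_j}` is then increasing, with
`a_j = (β_j r_j - δ)/(r_j + δ) > 0`. Hence `δ_j' ≥ a_j δ_j / t`, and the substitution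
`u = δ_j(t)` gives `∫ G(δ_j(t)) dt/t ≤ a_j⁻¹ ∫ G(u) du/u` for every `G ≥ 0`. This bounds the
`𝓛^θ` norms for finite `θ`; for `θ = ∞` it shows that `δ_j` pulls `du/u`-null sets back to
null sets.
-/

open MeasureTheory Set
open scoped ENNReal NNReal BigOperators

noncomputable section

lemma lintegral_muLog (g : ℝ → ℝ≥0∞) :
    ∫⁻ t, g t ∂muLog = ∫⁻ t in Ioi 0, ENNReal.ofReal t⁻¹ * g t := by
  rw [muLog, lintegral_withDensity_eq_lintegral_mul_non_measurable _
    (by fun_prop) (by filter_upwards with x using ENNReal.ofReal_lt_top)]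
  rfl

lemma ContinuousOn.aemeasurable_muLog {f : ℝ → ℝ} (hf : ContinuousOn f (Ioi 0)) :
    AEMeasurable f muLog :=
  (hf.aemeasurable measurableSet_Ioi).mono_ac (withDensity_absolutelyContinuous _ _)

lemma absolutelyContinuous_map_muLog {f : ℝ → ℝ} {C : ℝ≥0∞} (hf : AEMeasurable f muLog)
    (hfC : ∀ G : ℝ → ℝ≥0∞, ∫⁻ t, G (f t) ∂muLog ≤ C * ∫⁻ u, G u ∂muLog) :
    muLog.map f ≪ muLog := by
  refine Measure.AbsolutelyContinuous.mk fun s hs hs0 => ?_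
  rw [Measure.map_apply_of_aemeasurable hf hs,
    ← lintegral_indicator_one₀ (hf.nullMeasurable hs)]
  refine le_antisymm ?_ zero_le
  calc ∫⁻ t, (f ⁻¹' s).indicator 1 t ∂muLog = ∫⁻ t, s.indicator 1 (f t) ∂muLog := rfl
    _ ≤ C * ∫⁻ u, s.indicator 1 u ∂muLog := hfC _
    _ = 0 := by rw [lintegral_indicator_one hs, hs0, mul_zero]

theorem calLE_comp_le {f : ℝ → ℝ} {K : ℝ} (hK : 0 ≤ K) (hf : AEMeasurable f muLog)
    (hfK : ∀ G : ℝ → ℝ≥0∞, ∫⁻ t, G (f t) ∂muLog ≤ ENNReal.ofReal K * ∫⁻ u, G u ∂muLog)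
    (θ : ℝ≥0∞) (g : ℝ → ℝ≥0∞) :
    calLE θ (fun t => g (f t)) ≤ ENNReal.ofReal (K ^ (1 / θ.toReal)) * calLE θ g := by
  unfold calLE
  split_ifs with hθ
  · -- for `θ = ∞` the exponent `1 / θ.toReal` is `1 / 0 = 0`, so the constant is `1`
    rw [hθ, ENNReal.toReal_top, div_zero, Real.rpow_zero, ENNReal.ofReal_one, one_mul]
    exact (essSup_comp_le_essSup_map_measure hf).trans
      (essSup_mono_measure (absolutelyContinuous_map_muLog hf hfK))
  · rw [← ENNReal.ofReal_rpow_of_nonneg hK (by positivity),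
      ← ENNReal.mul_rpow_of_nonneg _ _ (by positivity)]
    exact ENNReal.rpow_le_rpow (hfK _) (by positivity)

section PowerGrowth

variable {f : ℝ → ℝ} {e : ℝ}

lemma div_rpow_neg_eq {u v : ℝ} (hu : 0 < u) (hv : 0 < v) : (v / u) ^ (-e) = u ^ e / v ^ e := by
  rw [Real.div_rpow hv.le hu.le, Real.rpow_neg hv.le, Real.rpow_neg hu.le, inv_div_inv]

theorem monotoneOn_mul_rpow_iff :
    MonotoneOn (fun t => f t * t ^ e) (Ioi 0) ↔
      ∀ ⦃u v : ℝ⦄, 0 < u → u ≤ v → f u * (v / u) ^ (-e) ≤ f v := by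
  refine ⟨fun hf u v hu huv => ?_, fun h u hu v hv huv => ?_⟩
  · have hv : 0 < v := hu.trans_le huv
    rw [div_rpow_neg_eq hu hv, mul_div_assoc', div_le_iff₀ (Real.rpow_pos_of_pos hv e)]
    exact hf hu hv huv
  · have := h hu huv
    rw [div_rpow_neg_eq (mem_Ioi.1 hu) (mem_Ioi.1 hv), mul_div_assoc',
      div_le_iff₀ (Real.rpow_pos_of_pos (mem_Ioi.1 hv) e)] at this
    exact this

lemma AntitoneOn.le_mul_div_rpow (hf : AntitoneOn (fun t => f t * t ^ e) (Ioi 0))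
    {u v : ℝ} (hu : 0 < u) (huv : u ≤ v) : f v ≤ f u * (v / u) ^ (-e) := by
  have hv : 0 < v := hu.trans_le huv
  rw [div_rpow_neg_eq hu hv, mul_div_assoc', le_div_iff₀ (Real.rpow_pos_of_pos hv e)]
  exact hf hu hv huv

end PowerGrowth

lemma rpow_mul_le_of_monotoneOn_mul_rpow {φ : ℝ → ℝ} {ρ d β t s x : ℝ}
    (hφ : MonotoneOn (fun t => φ t * t ^ (-ρ + d)) (Ioi 0)) (hd : 0 ≤ d) (hβ₀ : 0 ≤ β)
    (hβ₁ : β ≤ 1) (ht : 0 < t) (hts : t ≤ s) (hx : 0 < x) (hφx : 0 ≤ φ x) :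
    t ^ (d - β * ρ) * φ ((t / s) ^ β * x) ≤ s ^ (d - β * ρ) * φ x := by
  have hs : 0 < s := ht.trans_le hts
  have hm : 0 < (t / s) ^ β := by positivity
  have hmx : (t / s) ^ β * x ≤ x :=
    mul_le_of_le_one_left hx.le (Real.rpow_le_one (by positivity) ((div_le_one hs).2 hts) hβ₀)
  have hshrink : t ^ (β * (-ρ + d)) * φ ((t / s) ^ β * x) ≤ s ^ (β * (-ρ + d)) * φ x := by
    have h := hφ (mul_pos hm hx) hx hmx
    simp only at h
    rw [Real.mul_rpow hm.le hx.le, ← Real.rpow_mul (by positivity),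
      Real.div_rpow ht.le hs.le (β * (-ρ + d))] at h
    have hX : 0 < x ^ (-ρ + d) := by positivity
    have hS : 0 < s ^ (β * (-ρ + d)) := by positivity
    calc t ^ (β * (-ρ + d)) * φ ((t / s) ^ β * x)
        = φ ((t / s) ^ β * x) * (t ^ (β * (-ρ + d)) / s ^ (β * (-ρ + d)) * x ^ (-ρ + d)) *
            s ^ (β * (-ρ + d)) / x ^ (-ρ + d) := by field_simp
      _ ≤ φ x * x ^ (-ρ + d) * s ^ (β * (-ρ + d)) / x ^ (-ρ + d) :=
          div_le_div_of_nonneg_right (mul_le_mul_of_nonneg_right h hS.le) hX.le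
      _ = s ^ (β * (-ρ + d)) * φ x := by field_simp
  have hpow : t ^ (d * (1 - β)) ≤ s ^ (d * (1 - β)) :=
    Real.rpow_le_rpow ht.le hts (mul_nonneg hd (sub_nonneg.2 hβ₁))
  calc t ^ (d - β * ρ) * φ ((t / s) ^ β * x)
      = t ^ (d * (1 - β)) * (t ^ (β * (-ρ + d)) * φ ((t / s) ^ β * x)) := by
        rw [← mul_assoc, ← Real.rpow_add ht]; ring_nf
    _ ≤ t ^ (d * (1 - β)) * (s ^ (β * (-ρ + d)) * φ x) :=
        mul_le_mul_of_nonneg_left hshrink (by positivity)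
    _ ≤ s ^ (d * (1 - β)) * (s ^ (β * (-ρ + d)) * φ x) :=
        mul_le_mul_of_nonneg_right hpow (by positivity)
    _ = s ^ (d - β * ρ) * φ x := by
        rw [← mul_assoc, ← Real.rpow_add hs]; ring_nf

lemma sigmaFn_le_iSup {n : ℕ} {pp : Fin n → ℝ} {φ : Fin n → ℝ → ℝ}
    (hφ : ∀ i t, 0 < t → 0 ≤ φ i t) {t : ℝ} (ht : 0 ≤ t) {d : Fin n → ℝ}
    (hd : ∀ i, 0 < d i) (hprod : ∏ i, d i = t) :
    sigmaFn pp φ t ≤ ⨆ i, t ^ (-(pp i)⁻¹) * φ i (d i) := by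
  refine csInf_le ⟨0, ?_⟩ ⟨d, hd, hprod, rfl⟩
  rintro _ ⟨d', hd', -, rfl⟩
  exact Real.iSup_nonneg fun i => mul_nonneg (Real.rpow_nonneg ht _) (hφ i _ (hd' i))

section Balanced

variable {n : ℕ} [NeZero n] {pp rr β : Fin n → ℝ} {φ D : Fin n → ℝ → ℝ} {d c₀ : ℝ}

theorem monotoneOn_sigmaFn_mul_rpow (hβ : ∀ i, 0 ≤ β i) (hβsum : ∑ i, β i = 1)
    (hc₀ : ∀ i, β i * rr i - (pp i)⁻¹ = c₀) (hd : 0 ≤ d) (hφ : ∀ i t, 0 < t → 0 ≤ φ i t)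
    (hMono : ∀ i, MonotoneOn (fun t => φ i t * t ^ (-(rr i) + d)) (Ioi 0))
    (hD : ∀ i t, 0 < t → 0 < D i t) (hprod : ∀ t, 0 < t → ∏ i, D i t = t)
    (hσ : ∀ i t, 0 < t → sigmaFn pp φ t = t ^ (-(pp i)⁻¹) * φ i (D i t)) :
    MonotoneOn (fun t => sigmaFn pp φ t * t ^ (d - c₀)) (Ioi 0) := by
  intro t (ht : 0 < t) s (hs : 0 < s) hts
  have hβ₁ : ∀ i, β i ≤ 1 := fun i =>
    hβsum ▸ Finset.single_le_sum (fun j _ => hβ j) (Finset.mem_univ i)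
  have hexp : ∀ i, -(pp i)⁻¹ + (d - c₀) = d - β i * rr i := fun i => by linarith [hc₀ i]
  have hsplit : ∏ i, (t / s) ^ β i * D i s = t := by
    rw [Finset.prod_mul_distrib, ← Real.rpow_sum_of_pos (div_pos ht hs), hβsum, Real.rpow_one,
      hprod s hs]
    field_simp
  calc sigmaFn pp φ t * t ^ (d - c₀)
      ≤ (⨆ i, t ^ (-(pp i)⁻¹) * φ i ((t / s) ^ β i * D i s)) * t ^ (d - c₀) := by
        gcongr
        exact sigmaFn_le_iSup hφ ht.le (fun i => by have := hD i s hs; positivity) hsplit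
    _ = ⨆ i, t ^ (d - β i * rr i) * φ i ((t / s) ^ β i * D i s) := by
        rw [Real.iSup_mul_of_nonneg (by positivity)]
        congr 1 with i
        rw [mul_right_comm, ← Real.rpow_add ht, hexp]
    _ ≤ sigmaFn pp φ s * s ^ (d - c₀) := by
        refine ciSup_le fun i => ?_
        rw [hσ i s hs, mul_right_comm, ← Real.rpow_add hs, hexp]
        exact rpow_mul_le_of_monotoneOn_mul_rpow (hMono i) hd (hβ i) (hβ₁ i) ht hts (hD i s hs)
          (hφ i _ (hD i s hs))

theorem monotoneOn_comp_mul_rpow (hβ : ∀ i, 0 ≤ β i) (hβsum : ∑ i, β i = 1)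
    (hc₀ : ∀ i, β i * rr i - (pp i)⁻¹ = c₀) (hd : 0 ≤ d) (hφ : ∀ i t, 0 < t → 0 ≤ φ i t)
    (hMono : ∀ i, MonotoneOn (fun t => φ i t * t ^ (-(rr i) + d)) (Ioi 0))
    (hD : ∀ i t, 0 < t → 0 < D i t) (hprod : ∀ t, 0 < t → ∏ i, D i t = t)
    (hσ : ∀ i t, 0 < t → sigmaFn pp φ t = t ^ (-(pp i)⁻¹) * φ i (D i t)) (j : Fin n) :
    MonotoneOn (fun t => φ j (D j t) * t ^ (-(β j * rr j - d))) (Ioi 0) := by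
  refine (monotoneOn_sigmaFn_mul_rpow hβ hβsum hc₀ hd hφ hMono hD hprod hσ).congr
    fun t (ht : 0 < t) => ?_
  simp only
  rw [hσ j t ht, mul_right_comm, ← Real.rpow_add ht, mul_comm]
  congr 2
  linarith [hc₀ j]

end Balanced

theorem monotoneOn_mul_rpow_div_of_comp {φ D : ℝ → ℝ} {A B : ℝ}
    (hφ : StrictMonoOn φ (Ioi 0)) (hφ₀ : ∀ t, 0 < t → 0 < φ t)
    (hAnti : AntitoneOn (fun t => φ t * t ^ (-B)) (Ioi 0)) (hB : 0 < B) (hA : 0 ≤ A)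
    (hD : ∀ t, 0 < t → 0 < D t) (hMono : MonotoneOn (fun t => φ (D t) * t ^ (-A)) (Ioi 0)) :
    MonotoneOn (fun t => D t * t ^ (-(A / B))) (Ioi 0) := by
  refine monotoneOn_mul_rpow_iff.2 fun t s ht hts => ?_
  have hx := hD t ht
  have hy := hD s (ht.trans_le hts)
  have hq : 1 ≤ (s / t) ^ A := Real.one_le_rpow ((one_le_div ht).2 hts) hA
  have hgrow : φ (D t) * (s / t) ^ A ≤ φ (D s) := by
    simpa only [neg_neg] using monotoneOn_mul_rpow_iff.1 hMono ht hts
  have hxy : D t ≤ D s := le_of_not_gt fun hyx =>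
    (hφ hy hx hyx).not_ge ((le_mul_of_one_le_right (hφ₀ _ hx).le hq).trans hgrow)
  have hbound : (s / t) ^ A ≤ (D s / D t) ^ B := by
    have h := hgrow.trans (by simpa only [neg_neg] using hAnti.le_mul_div_rpow hx hxy)
    exact le_of_mul_le_mul_left h (hφ₀ _ hx)
  rw [neg_neg, mul_comm, ← le_div_iff₀ hx, div_eq_mul_inv A,
    Real.rpow_mul (div_pos (ht.trans_le hts) ht).le]
  calc ((s / t) ^ A) ^ B⁻¹ ≤ ((D s / D t) ^ B) ^ B⁻¹ :=
        Real.rpow_le_rpow (by positivity) hbound (inv_nonneg.2 hB.le)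
    _ = D s / D t := Real.rpow_rpow_inv (div_pos hy hx).le hB.ne'

lemma mul_div_le_deriv_of_monotoneOn_mul_rpow {f : ℝ → ℝ} {a t : ℝ}
    (hf : MonotoneOn (fun t => f t * t ^ (-a)) (Ioi 0)) (ht : 0 < t)
    (hdf : DifferentiableAt ℝ f t) : a * f t / t ≤ deriv f t := by
  have hderiv : HasDerivAt (fun t => f t * t ^ (-a))
      (deriv f t * t ^ (-a) + f t * (-a * t ^ (-a - 1))) t :=
    hdf.hasDerivAt.mul (Real.hasDerivAt_rpow_const (Or.inl ht.ne'))
  have h0 : 0 ≤ deriv f t * t ^ (-a) + f t * (-a * t ^ (-a - 1)) := by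
    rw [← hderiv.deriv, ← derivWithin_of_isOpen isOpen_Ioi ht]
    exact hf.derivWithin_nonneg
  rw [Real.rpow_sub_one ht.ne'] at h0
  have h1 : 0 ≤ t ^ (-a) * (deriv f t - a * f t / t) := h0.trans_eq (by ring)
  exact sub_nonneg.1 (nonneg_of_mul_nonneg_right h1 (by positivity))

theorem lintegral_comp_le_muLog {f : ℝ → ℝ} {a : ℝ} (ha : 0 < a) (hf₀ : ∀ t, 0 < t → 0 < f t)
    (hf : DifferentiableOn ℝ f (Ioi 0)) (hfa : MonotoneOn (fun t => f t * t ^ (-a)) (Ioi 0))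
    (G : ℝ → ℝ≥0∞) :
    ∫⁻ t, G (f t) ∂muLog ≤ ENNReal.ofReal a⁻¹ * ∫⁻ u, G u ∂muLog := by
  have hdiff : ∀ t ∈ Ioi (0 : ℝ), HasDerivAt f (deriv f t) t := fun t ht =>
    (hf.differentiableAt (Ioi_mem_nhds ht)).hasDerivAt
  have hmono : MonotoneOn f (Ioi 0) := fun t ht s hs hts => by
    have h := monotoneOn_mul_rpow_iff.1 hfa ht hts
    rw [neg_neg] at h
    exact (le_mul_of_one_le_right (hf₀ t ht).le
      (Real.one_le_rpow ((one_le_div ht).2 hts) ha.le)).trans h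
  have hpt : ∀ t ∈ Ioi (0 : ℝ), ENNReal.ofReal t⁻¹ * G (f t) ≤
      ENNReal.ofReal a⁻¹ * (ENNReal.ofReal (deriv f t) * (ENNReal.ofReal (f t)⁻¹ * G (f t))) := by
    intro t (ht : 0 < t)
    have hft := hf₀ t ht
    have hd := mul_div_le_deriv_of_monotoneOn_mul_rpow hfa ht (hdiff t ht).differentiableAt
    have hd₀ : 0 ≤ deriv f t := (by positivity : 0 ≤ a * f t / t).trans hd
    rw [← mul_assoc, ← mul_assoc, ← ENNReal.ofReal_mul (by positivity),
      ← ENNReal.ofReal_mul (by positivity)]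
    gcongr
    calc t⁻¹ = a⁻¹ * (a * f t / t) * (f t)⁻¹ := by field_simp
      _ ≤ a⁻¹ * deriv f t * (f t)⁻¹ := by gcongr
  rw [lintegral_muLog, lintegral_muLog]
  calc ∫⁻ t in Ioi 0, ENNReal.ofReal t⁻¹ * G (f t)
      ≤ ∫⁻ t in Ioi 0, ENNReal.ofReal a⁻¹ *
          (ENNReal.ofReal (deriv f t) * (ENNReal.ofReal (f t)⁻¹ * G (f t))) :=
        setLIntegral_mono' measurableSet_Ioi hpt
    _ = ENNReal.ofReal a⁻¹ * ∫⁻ u in f '' Ioi 0, ENNReal.ofReal u⁻¹ * G u := by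
        rw [lintegral_const_mul' _ _ ENNReal.ofReal_ne_top,
          lintegral_image_eq_lintegral_deriv_mul_of_monotoneOn measurableSet_Ioi
            (fun t ht => (hdiff t ht).hasDerivWithinAt) hmono]
    _ ≤ ENNReal.ofReal a⁻¹ * ∫⁻ u in Ioi 0, ENNReal.ofReal u⁻¹ * G u := by
        gcongr
        exact image_subset_iff.2 hf₀

lemma sum_beta_eq_one {n : ℕ} [NeZero n] {rr pp β : Fin n → ℝ} {r p : ℝ}
    (hrr : ∀ j, 0 < rr j) (hrdef : r = (n : ℝ) / ∑ j, (rr j)⁻¹)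
    (hpdef : p = ((n : ℝ) / r) / ∑ j, (pp j * rr j)⁻¹)
    (hβdef : ∀ j, β j = (rr j)⁻¹ * (r / n + (pp j)⁻¹ - p⁻¹)) :
    ∑ j, β j = 1 := by
  have hS : 0 < ∑ j, (rr j)⁻¹ :=
    Finset.sum_pos (fun j _ => inv_pos.2 (hrr j)) Finset.univ_nonempty
  have hn : (n : ℝ) ≠ 0 := Nat.cast_ne_zero.2 (NeZero.ne n)
  have hr : r ≠ 0 := hrdef ▸ div_ne_zero hn hS.ne'
  have hsum : ∑ j, (rr j)⁻¹ = n / r := by rw [hrdef, div_div_cancel₀ hn]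
  have hpinv : p⁻¹ = r / n * ∑ j, (pp j * rr j)⁻¹ := by
    rw [hpdef, inv_div, div_div_eq_mul_div]; ring
  calc ∑ j, β j = ∑ j, ((r / n - p⁻¹) * (rr j)⁻¹ + (pp j * rr j)⁻¹) :=
        Finset.sum_congr rfl fun j _ => by rw [hβdef j, mul_inv]; ring
    _ = 1 := by
        rw [Finset.sum_add_distrib, ← Finset.mul_sum, hsum, hpinv]
        field_simp
        ring

theorem stmt5_general (n : ℕ) (hn : 0 < n) (rr pp : Fin n → ℝ) (θθ : Fin n → ℝ≥0∞)
    (hrr : ∀ j, 0 < rr j)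
    (r p : ℝ) (β : Fin n → ℝ)
    (hrdef : r = (n : ℝ) / ∑ j, (rr j)⁻¹)
    (hpdef : p = ((n : ℝ) / r) / ∑ j, (pp j * rr j)⁻¹)
    (hβdef : ∀ j, β j = (rr j)⁻¹ * (r / n + (pp j)⁻¹ - p⁻¹))
    (hβ : ∀ j, 0 < β j)
    (δ : ℝ) (hδ : 0 < δ) (hδ' : δ ≤ (1 / 2) * ⨅ j, β j * rr j) :
    ∃ c : ℝ, 0 < c ∧
      ∀ φ : Fin n → ℝ → ℝ,
      (∀ j t, 0 < t → 0 < φ j t) →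
      (∀ j, StrictMonoOn (φ j) (Set.Ioi 0)) →
      (∀ j, ContDiffOn ℝ 1 (φ j) (Set.Ioi 0)) →
      (∀ j, calL (θθ j) (fun t => t ^ (-(rr j)) * φ j t) < ∞) →
      (∀ j, MonotoneOn (fun t => φ j t * t ^ (-(rr j) + δ)) (Set.Ioi 0)) →
      (∀ j, AntitoneOn (fun t => φ j t * t ^ (-(rr j) - δ)) (Set.Ioi 0)) →
      ∀ δfun : Fin n → ℝ → ℝ,
      (∀ j, ContDiffOn ℝ 1 (δfun j) (Set.Ioi 0)) →
      (∀ j t, 0 < t → 0 < δfun j t) →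
      (∀ t, 0 < t → (∏ j, δfun j t) = t) →
      (∀ j t, 0 < t → sigmaFn pp φ t = t ^ (-(pp j)⁻¹) * φ j (δfun j t)) →
      ∀ j, calL (θθ j) (fun t => (δfun j t) ^ (-(rr j)) * φ j (δfun j t)) ≤
        ENNReal.ofReal c * calL (θθ j) (fun t => t ^ (-(rr j)) * φ j t) := by
  have : NeZero n := ⟨hn.ne'⟩
  have hc₀ : ∀ j, β j * rr j - (pp j)⁻¹ = r / n - p⁻¹ := fun j => by
    rw [hβdef j]; field_simp [(hrr j).ne']; ring
  have hδβ : ∀ j, 2 * δ ≤ β j * rr j := fun j => by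
    linarith [ciInf_le (Set.finite_range fun i => β i * rr i).bddBelow j]
  set a : Fin n → ℝ := fun j => (β j * rr j - δ) / (rr j + δ)
  have ha : ∀ j, 0 < a j := fun j => div_pos (by linarith [hδβ j]) (by linarith [hrr j])
  refine ⟨∑ j, (a j)⁻¹ ^ (1 / (θθ j).toReal),
    Finset.sum_pos (fun j _ => by have := ha j; positivity) Finset.univ_nonempty, ?_⟩
  intro φ hφ₀ hφ _ _ hMono hAnti D hD₁ hD₀ hprod hσ j
  have hDa : MonotoneOn (fun t => D j t * t ^ (-a j)) (Ioi 0) :=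
    monotoneOn_mul_rpow_div_of_comp (hφ j) (hφ₀ j) (by simpa only [neg_add'] using hAnti j)
      (by linarith [hrr j]) (by linarith [hδβ j]) (hD₀ j)
      (monotoneOn_comp_mul_rpow (fun i => (hβ i).le) (sum_beta_eq_one hrr hrdef hpdef hβdef)
        hc₀ hδ.le (fun i t ht => (hφ₀ i t ht).le) hMono hD₀ hprod hσ j)
  calc calL (θθ j) (fun t => (D j t) ^ (-(rr j)) * φ j (D j t))
      ≤ ENNReal.ofReal ((a j)⁻¹ ^ (1 / (θθ j).toReal)) *
          calL (θθ j) (fun t => t ^ (-(rr j)) * φ j t) :=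
        calLE_comp_le (g := fun u => ENNReal.ofReal |u ^ (-(rr j)) * φ j u|)
          (inv_nonneg.2 (ha j).le) (hD₁ j).continuousOn.aemeasurable_muLog
          (lintegral_comp_le_muLog (ha j) (hD₀ j) ((hD₁ j).differentiableOn one_ne_zero) hDa) _
    _ ≤ _ := by
        gcongr
        exact Finset.single_le_sum (f := fun i => (a i)⁻¹ ^ (1 / (θθ i).toReal))
          (fun i _ => by have := ha i; positivity) (Finset.mem_univ j)

/-- Lemma 3(iv): the `𝓛^{θ_j}` norm of `δ_j(t)^{-r_j} φ_j(δ_j(t))` is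
controlled by that of `t^{-r_j} φ_j(t)`. -/
theorem stmt5 (n : ℕ) (hn : 0 < n) (rr pp : Fin n → ℝ) (θθ : Fin n → ℝ≥0∞)
    (hrr : ∀ j, 0 < rr j) (hpp : ∀ j, 1 ≤ pp j) (hθθ : ∀ j, 1 ≤ θθ j)
    (r p : ℝ) (θ : ℝ≥0∞) (β : Fin n → ℝ)
    (hrdef : r = (n : ℝ) / ∑ j, (rr j)⁻¹)
    (hpdef : p = ((n : ℝ) / r) / ∑ j, (pp j * rr j)⁻¹)
    (hθdef : θ = (ENNReal.ofReal ((r / n) * ∑ j, ((θθ j)⁻¹).toReal / rr j))⁻¹)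
    (hβdef : ∀ j, β j = (rr j)⁻¹ * (r / n + (pp j)⁻¹ - p⁻¹))
    (hβ : ∀ j, 0 < β j)
    (δ : ℝ) (hδ : 0 < δ) (hδ' : δ ≤ (1 / 2) * ⨅ j, β j * rr j) :
    ∃ c : ℝ, 0 < c ∧
      ∀ φ : Fin n → ℝ → ℝ,
      (∀ j t, 0 < t → 0 < φ j t) →
      (∀ j, StrictMonoOn (φ j) (Set.Ioi 0)) →
      (∀ j, ContDiffOn ℝ 1 (φ j) (Set.Ioi 0)) →
      (∀ j, calL (θθ j) (fun t => t ^ (-(rr j)) * φ j t) < ∞) →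
      (∀ j, MonotoneOn (fun t => φ j t * t ^ (-(rr j) + δ)) (Set.Ioi 0)) →
      (∀ j, AntitoneOn (fun t => φ j t * t ^ (-(rr j) - δ)) (Set.Ioi 0)) →
      ∀ δfun : Fin n → ℝ → ℝ,
      (∀ j, ContDiffOn ℝ 1 (δfun j) (Set.Ioi 0)) →
      (∀ j t, 0 < t → 0 < δfun j t) →
      (∀ t, 0 < t → (∏ j, δfun j t) = t) →
      (∀ j t, 0 < t → sigmaFn pp φ t = t ^ (-(pp j)⁻¹) * φ j (δfun j t)) →
      ∀ j, calL (θθ j) (fun t => (δfun j t) ^ (-(rr j)) * φ j (δfun j t)) ≤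
        ENNReal.ofReal c * calL (θθ j) (fun t => t ^ (-(rr j)) * φ j t) :=
  stmt5_general n hn rr pp θθ hrr r p β hrdef hpdef hβdef hβ δ hδ hδ'

end
end

section
/- Let 1 ≤ q < ∞ and k ∈ ℕ, set ξ₀ = (2^{k+2})^q, and let g ∈ S₀(ℝⁿ) satisfy J = ∫₀^∞ t^{1/q − 1} g*(t) dt < ∞. Define Q = { t > 0 : g*(t) ≥ 2^{k+1} g*(ξ₀ t) }. Then ∫_{(0,∞)∖Q} t^{1/q − 1} g*(t) dt ≤ (1/2) J, and consequently J ≤ 2 ∫_Q t^{1/q − 1} g*(t) dt. -/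
open MeasureTheory Set
open scoped ENNReal NNReal BigOperators

noncomputable section

/-!
Off `Q` we have `g*(t) < 2^{k+1} g*(ξ₀ t)`, and the substitution `u = ξ₀ t` gives
`∫₀^∞ t^{1/q-1} g*(ξ₀ t) dt = ξ₀^{-1/q} J = 2^{-(k+2)} J`. Hence the integral over the complement
of `Q` is at most `2^{k+1} 2^{-(k+2)} J = J/2`, and since `J < ∞` the second bound follows by
subtracting it from `J`. Measurability is supplied by the monotonicity of `g*`.
-/

open Filter Topology

section Rearrangement

variable {n : ℕ} {g : (Fin n → ℝ) → ℝ}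

lemma tendsto_distFn_atTop (hg : MemS0 g) : Tendsto (distFn g) atTop (𝓝 0) := by
  have hempty : ⋂ y : ℝ, {x : Fin n → ℝ | y < |g x|} = ∅ :=
    Set.eq_empty_of_forall_notMem fun x hx => lt_irrefl |g x| (Set.mem_iInter.1 hx |g x|)
  have h := tendsto_measure_iInter_atTop (μ := volume) (s := fun y : ℝ => {x | y < |g x|})
    (fun y => (measurableSet_lt measurable_const hg.1.abs).nullMeasurableSet)
    (fun _ _ hyz _ hx => hyz.trans_lt hx) ⟨1, (hg.2 1 one_pos).ne⟩
  rwa [hempty, measure_empty] at h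

lemma rearr_antitoneOn (hg : MemS0 g) : AntitoneOn (rearr g) (Ioi 0) := by
  intro t₁ ht₁ t₂ _ h12
  obtain ⟨y, hy⟩ := ((tendsto_distFn_atTop hg).eventually_lt_const
    (ENNReal.ofReal_pos.2 ht₁)).and (eventually_ge_atTop 0) |>.exists
  exact csInf_le_csInf ⟨0, fun _ hy => hy.1⟩ ⟨y, hy.2, hy.1.le⟩
    fun y hy => ⟨hy.1, hy.2.trans (ENNReal.ofReal_le_ofReal h12)⟩

end Rearrangement

lemma lintegral_Ioi_comp_mul_left (F : ℝ → ℝ≥0∞) {c : ℝ} (hc : 0 < c) :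
    ∫⁻ t in Ioi 0, F (c * t) = ENNReal.ofReal c⁻¹ * ∫⁻ u in Ioi 0, F u := by
  have hemb : MeasurableEmbedding (c * ·) := (Homeomorph.mulLeft₀ c hc.ne').measurableEmbedding
  have hpre : (c * ·) ⁻¹' Ioi 0 = Ioi (0 : ℝ) := by rw [preimage_const_mul_Ioi₀ 0 hc, zero_div]
  conv_lhs => rw [← hpre]
  rw [← hemb.lintegral_map, ← hemb.restrict_map, Real.map_volume_mul_left hc.ne',
    Measure.restrict_smul, lintegral_smul_measure, abs_of_pos (inv_pos.2 hc), smul_eq_mul]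

lemma lintegral_Ioi_rpow_mul_comp_mul_left (f : ℝ → ℝ) (a : ℝ) {c : ℝ} (hc : 0 < c) :
    ∫⁻ t in Ioi 0, ENNReal.ofReal (t ^ a * f (c * t)) =
      ENNReal.ofReal (c ^ (-a - 1)) * ∫⁻ t in Ioi 0, ENNReal.ofReal (t ^ a * f t) := by
  have h : ∀ t ∈ Ioi (0 : ℝ), ENNReal.ofReal (t ^ a * f (c * t)) =
      ENNReal.ofReal (c ^ (-a)) * ENNReal.ofReal ((c * t) ^ a * f (c * t)) := by
    intro t ht
    rw [← ENNReal.ofReal_mul (by positivity), Real.mul_rpow hc.le (le_of_lt ht),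
      Real.rpow_neg hc.le]
    congr 1
    field_simp
  rw [setLIntegral_congr_fun measurableSet_Ioi h, lintegral_const_mul' _ _ ENNReal.ofReal_ne_top,
    lintegral_Ioi_comp_mul_left (fun u => ENNReal.ofReal (u ^ a * f u)) hc, ← mul_assoc,
    ← ENNReal.ofReal_mul (by positivity), ← Real.rpow_neg_one, ← Real.rpow_add hc,
    ← sub_eq_add_neg]

lemma setLIntegral_Ioi_diff_le {f : ℝ → ℝ} (hf : AntitoneOn f (Ioi 0)) {l c : ℝ} (hl : 0 ≤ l)
    (hc : 0 < c) (a : ℝ) :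
    ∫⁻ t in Ioi 0 \ {t | 0 < t ∧ l * f (c * t) ≤ f t}, ENNReal.ofReal (t ^ a * f t) ≤
      ENNReal.ofReal (l * c ^ (-a - 1)) * ∫⁻ t in Ioi 0, ENNReal.ofReal (t ^ a * f t) := by
  set Q := {t | 0 < t ∧ l * f (c * t) ≤ f t}
  have hfc : AntitoneOn (fun t => f (c * t)) (Ioi 0) := fun s hs t ht hst =>
    hf (mul_pos hc hs) (mul_pos hc ht) (by gcongr)
  have hmeas : AEMeasurable (fun t => ENNReal.ofReal l * ENNReal.ofReal (t ^ a * f (c * t)))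
      (volume.restrict (Ioi 0)) :=
    ((measurable_id.pow_const a).aemeasurable.mul
      (aemeasurable_restrict_of_antitoneOn measurableSet_Ioi hfc)).ennreal_ofReal.const_mul _
  have hbound : ∀ t ∈ Ioi 0 \ Q,
      ENNReal.ofReal (t ^ a * f t) ≤ ENNReal.ofReal l * ENNReal.ofReal (t ^ a * f (c * t)) := by
    rintro t ⟨ht, htQ⟩
    have hlt : f t < l * f (c * t) := lt_of_not_ge fun h => htQ ⟨ht, h⟩
    rw [← ENNReal.ofReal_mul hl, mul_left_comm]
    exact ENNReal.ofReal_le_ofReal (mul_le_mul_of_nonneg_left hlt.le (Real.rpow_nonneg ht.le a))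
  calc ∫⁻ t in Ioi 0 \ Q, ENNReal.ofReal (t ^ a * f t)
      ≤ ∫⁻ t in Ioi 0 \ Q, ENNReal.ofReal l * ENNReal.ofReal (t ^ a * f (c * t)) :=
        setLIntegral_mono_ae (hmeas.mono_measure (Measure.restrict_mono sdiff_subset le_rfl))
          (ae_of_all _ hbound)
    _ ≤ ∫⁻ t in Ioi 0, ENNReal.ofReal l * ENNReal.ofReal (t ^ a * f (c * t)) :=
        lintegral_mono_set sdiff_subset
    _ = ENNReal.ofReal (l * c ^ (-a - 1)) * ∫⁻ t in Ioi 0, ENNReal.ofReal (t ^ a * f t) := by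
        rw [lintegral_const_mul' _ _ ENNReal.ofReal_ne_top,
          lintegral_Ioi_rpow_mul_comp_mul_left f a hc, ← mul_assoc, ← ENNReal.ofReal_mul hl]

lemma ENNReal.le_two_mul_of_le_add_of_le_half {J A B : ℝ≥0∞} (hJ : J ≠ ∞) (hle : J ≤ A + B)
    (hA : A ≤ J / 2) : J ≤ 2 * B := by
  have : J / 2 ≤ B := by
    refine (ENNReal.add_le_add_iff_left (ENNReal.div_ne_top hJ two_ne_zero)).1 ?_
    rw [ENNReal.add_halves]
    exact hle.trans (by gcongr)
  calc J = 2 * (J / 2) := (ENNReal.mul_div_cancel two_ne_zero ENNReal.ofNat_ne_top).symm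
    _ ≤ 2 * B := by gcongr

/-- reduction of the Lorentz integral `J` to the set `Q` where the
rearrangement does not decay too fast. -/
theorem stmt14 (n : ℕ) (q : ℝ) (hq : 1 ≤ q) (k : ℕ)
    (g : (Fin n → ℝ) → ℝ) (hg : MemS0 g)
    (ξ₀ : ℝ) (hξ₀ : ξ₀ = ((2 : ℝ) ^ (k + 2)) ^ q)
    (Q : Set ℝ) (hQ : Q = {t : ℝ | 0 < t ∧ (2 : ℝ) ^ (k + 1) * rearr g (ξ₀ * t) ≤ rearr g t})
    (J : ℝ≥0∞) (hJ : J = ∫⁻ t in Set.Ioi (0 : ℝ), ENNReal.ofReal (t ^ (q⁻¹ - 1) * rearr g t))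
    (hJfin : J < ∞) :
    (∫⁻ t in Set.Ioi (0 : ℝ) \ Q, ENNReal.ofReal (t ^ (q⁻¹ - 1) * rearr g t)) ≤ J / 2 ∧
    J ≤ 2 * ∫⁻ t in Q, ENNReal.ofReal (t ^ (q⁻¹ - 1) * rearr g t) := by
  subst hξ₀ hQ hJ
  have hconst : (2 : ℝ) ^ (k + 1) * (((2 : ℝ) ^ (k + 2)) ^ q) ^ (-(q⁻¹ - 1) - 1) = 2⁻¹ := by
    rw [show -(q⁻¹ - 1) - 1 = -q⁻¹ by ring, Real.rpow_neg (by positivity),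
      Real.rpow_rpow_inv (by positivity) (zero_lt_one.trans_le hq).ne', pow_succ 2 (k + 1)]
    field_simp
  have hcompl := setLIntegral_Ioi_diff_le (l := 2 ^ (k + 1)) (c := (2 ^ (k + 2)) ^ q)
    (rearr_antitoneOn hg) (by positivity) (by positivity) (q⁻¹ - 1)
  rw [hconst, ENNReal.ofReal_inv_of_pos two_pos, ENNReal.ofReal_ofNat,
    ← ENNReal.div_eq_inv_mul] at hcompl
  refine ⟨hcompl, ENNReal.le_two_mul_of_le_add_of_le_half hJfin.ne ?_ hcompl⟩
  exact (lintegral_mono_set (subset_sdiff_union _ _)).trans (lintegral_union_le _ _ _)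

end
end
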